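/- arXiv:math/0407260 — 4 statements merged into one kernel-verified Lean document; each statement's English description precedes it below -/
import Mathlib

section
/- For every positive integer n and all real numbers t_1, ..., t_n in (0, ∞), the function Φ_n is decreasing on the interval (0, 1); that is, for all 0 < x < u < 1 one has Φ_n(u) ≤ Φ_n(x). -/
open MeasureTheory Real

/-- The one-dimensional Gaussian density `p_t(x) = (2πt)^{-1/2} exp(-x²/(2t))`. -/
noncomputable def gaussDensity (t x : ℝ) : ℝ :=
  (Real.sqrt (2 * Real.pi * t))⁻¹ * Real.exp (-x ^ 2 / (2 * t))

/-- `Φ_n(x) = ∫_{-1}^{1} ⋯ ∫_{-1}^{1} ∏_{i=1}^{n} p_{t_i}(x_{i-1} - x_i) dx_1 ⋯ dx_n`,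
with `x_0 = x`. -/
noncomputable def Phi (n : ℕ) (t : Fin n → ℝ) (x : ℝ) : ℝ :=
  ∫ y in Set.Icc (fun _ : Fin n => (-1 : ℝ)) (fun _ : Fin n => (1 : ℝ)),
    ∏ i : Fin n,
      gaussDensity (t i) ((Fin.cons x y : Fin (n + 1) → ℝ) i.castSucc - (Fin.cons x y : Fin (n + 1) → ℝ) i.succ)

lemma gauss_nonneg (t x : ℝ) : 0 ≤ gaussDensity t x := by
  unfold gaussDensity; positivity

lemma gauss_even (t x : ℝ) : gaussDensity t (-x) = gaussDensity t x := by
  simp [gaussDensity, neg_pow]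

lemma gauss_continuous (t : ℝ) : Continuous (gaussDensity t) := by
  unfold gaussDensity; fun_prop

lemma gauss_le {t : ℝ} (ht : 0 < t) {a b : ℝ} (h : a ^ 2 ≤ b ^ 2) :
    gaussDensity t b ≤ gaussDensity t a := by
  unfold gaussDensity
  have h1 : (0:ℝ) < 2 * t := by linarith
  gcongr

lemma gauss_le_bound {t : ℝ} (ht : 0 < t) (x : ℝ) :
    gaussDensity t x ≤ (Real.sqrt (2 * Real.pi * t))⁻¹ := by
  unfold gaussDensity
  have : Real.exp (-x ^ 2 / (2 * t)) ≤ 1 := by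
    apply Real.exp_le_one_iff.2
    apply div_nonpos_of_nonpos_of_nonneg (neg_nonpos.2 (pow_two_nonneg x)) (by positivity)
  calc (Real.sqrt (2 * Real.pi * t))⁻¹ * Real.exp (-x ^ 2 / (2 * t))
      ≤ (Real.sqrt (2 * Real.pi * t))⁻¹ * 1 := by gcongr
    _ = _ := mul_one _

lemma gauss_integrable {t : ℝ} (ht : 0 < t) : Integrable (gaussDensity t) := by
  have : Integrable (fun x : ℝ => Real.exp (-(1/(2*t)) * x ^ 2)) := integrable_exp_neg_mul_sq (by positivity)
  have h2 := this.const_mul (Real.sqrt (2 * Real.pi * t))⁻¹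
  convert h2 using 2 with x
  unfold gaussDensity
  ring_nf

lemma gauss_integral {t : ℝ} (ht : 0 < t) : ∫ x, gaussDensity t x = 1 := by
  unfold gaussDensity
  rw [MeasureTheory.integral_const_mul]
  have : ∀ x : ℝ, Real.exp (-x ^ 2 / (2 * t)) = Real.exp (-(1/(2*t)) * x ^ 2) := by
    intro x; ring_nf
  simp_rw [this]
  rw [integral_gaussian]
  rw [← Real.sqrt_inv]
  rw [← Real.sqrt_mul (by positivity)]
  have : (2 * Real.pi * t)⁻¹ * (Real.pi / (1/(2*t))) = 1 := by
    field_simp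
  rw [this, Real.sqrt_one]

lemma gauss_interval_anti {t b : ℝ} (ht : 0 < t) (hb : 0 ≤ b) {x u : ℝ}
    (hx : 0 ≤ x) (hxu : x ≤ u) :
    ∫ y in Set.Icc (-b) b, gaussDensity t (u - y) ≤
      ∫ y in Set.Icc (-b) b, gaussDensity t (x - y) := by
  have hbb : (-b : ℝ) ≤ b := by linarith
  have key : ∀ c : ℝ, ∫ y in Set.Icc (-b) b, gaussDensity t (c - y) =
      ∫ z in (c - b)..(c + b), gaussDensity t z := by
    intro c
    rw [MeasureTheory.integral_Icc_eq_integral_Ioc, ← intervalIntegral.integral_of_le hbb,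
      intervalIntegral.integral_comp_sub_left (gaussDensity t) c, sub_neg_eq_add]
  rw [key, key]
  set F : ℝ → ℝ := fun c => ∫ z in (c - b)..(c + b), gaussDensity t z with hF
  have hG : ∀ z : ℝ, HasDerivAt (fun w => ∫ s in (0:ℝ)..w, gaussDensity t s)
      (gaussDensity t z) z := by
    intro z
    exact intervalIntegral.integral_hasDerivAt_right
      ((gauss_continuous t).intervalIntegrable _ _)
      ((gauss_continuous t).stronglyMeasurable.stronglyMeasurableAtFilter)
      (gauss_continuous t).continuousAt
  have hFG : ∀ c : ℝ, F c = (∫ s in (0:ℝ)..(c + b), gaussDensity t s)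
      - ∫ s in (0:ℝ)..(c - b), gaussDensity t s := by
    intro c
    rw [intervalIntegral.integral_interval_sub_left
      ((gauss_continuous t).intervalIntegrable _ _)
      ((gauss_continuous t).intervalIntegrable _ _)]
  have hFderiv : ∀ c : ℝ, HasDerivAt F (gaussDensity t (c + b) - gaussDensity t (c - b)) c := by
    intro c
    have h1 : HasDerivAt (fun c : ℝ => ∫ s in (0:ℝ)..(c + b), gaussDensity t s)
        (gaussDensity t (c + b)) c := by
      simpa [Function.comp_def] using (hG (c + b)).comp c ((hasDerivAt_id c).add_const b)
    have h2 : HasDerivAt (fun c : ℝ => ∫ s in (0:ℝ)..(c - b), gaussDensity t s)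
        (gaussDensity t (c - b)) c := by
      simpa [Function.comp_def] using (hG (c - b)).comp c ((hasDerivAt_id c).sub_const b)
    have := h1.sub h2
    apply this.congr_of_eventuallyEq
    filter_upwards with w using (hFG w)
  have hanti : AntitoneOn F (Set.Ici 0) := by
    apply antitoneOn_of_deriv_nonpos (convex_Ici 0)
    · exact (continuous_iff_continuousAt.2 fun c => (hFderiv c).continuousAt).continuousOn
    · intro c _; exact (hFderiv c).differentiableAt.differentiableWithinAt
    · intro c hc
      rw [(hFderiv c).deriv]
      have hc0 : 0 < c := by simpa using hc
      have : (c - b) ^ 2 ≤ (c + b) ^ 2 := by nlinarith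
      linarith [gauss_le ht this]
  exact hanti hx (le_trans hx hxu) hxu

def QQ (g : ℝ → ℝ) : Prop :=
  Measurable g ∧ (∀ y, 0 ≤ g y) ∧ (∀ y, g y ≤ 1) ∧ (∀ y, g (-y) = g y) ∧
    (∀ ⦃a c : ℝ⦄, 0 ≤ a → a ≤ c → g c ≤ g a)

noncomputable def TT (t : ℝ) (g : ℝ → ℝ) (x : ℝ) : ℝ :=
  ∫ y in Set.Icc (-1 : ℝ) 1, gaussDensity t (x - y) * g y

lemma integrable_TT {t : ℝ} (ht : 0 < t) {g : ℝ → ℝ} (hQ : QQ g) (x : ℝ) :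
    IntegrableOn (fun y => gaussDensity t (x - y) * g y) (Set.Icc (-1 : ℝ) 1) := by
  obtain ⟨hgm, hg0, hg1, _, _⟩ := hQ
  have hmeas : Measurable fun y => gaussDensity t (x - y) * g y :=
    (((gauss_continuous t).comp (continuous_const.sub continuous_id)).measurable).mul hgm
  have hconst : IntegrableOn (fun _ : ℝ => (Real.sqrt (2 * Real.pi * t))⁻¹)
      (Set.Icc (-1:ℝ) 1) :=
    integrableOn_const (by rw [Real.volume_Icc]; exact ENNReal.ofReal_ne_top)
  refine Integrable.mono' hconst hmeas.aestronglyMeasurable ?_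
  · filter_upwards with y
    rw [Real.norm_eq_abs, abs_of_nonneg (mul_nonneg (gauss_nonneg _ _) (hg0 y))]
    calc gaussDensity t (x - y) * g y ≤ (Real.sqrt (2 * Real.pi * t))⁻¹ * 1 :=
          mul_le_mul (gauss_le_bound ht _) (hg1 y) (hg0 y) (by positivity)
      _ = _ := mul_one _

lemma TT_anti {t : ℝ} (ht : 0 < t) {g : ℝ → ℝ} (hQ : QQ g) {x u : ℝ}
    (hx : 0 ≤ x) (hxu : x ≤ u) : TT t g u ≤ TT t g x := by
  obtain ⟨hgm, hg0, hg1, hgeven, hganti⟩ := hQ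
  set C : ℝ := (Real.sqrt (2 * Real.pi * t))⁻¹ with hC
  set D : ℝ → ℝ := fun y => gaussDensity t (x - y) - gaussDensity t (u - y) with hD
  have hDmeas : Measurable D :=
    (((gauss_continuous t).comp (continuous_const.sub continuous_id)).measurable).sub
      (((gauss_continuous t).comp (continuous_const.sub continuous_id)).measurable)
  have hDbound : ∀ y, ‖D y‖ ≤ 2 * C := by
    intro y
    rw [Real.norm_eq_abs]
    have h1 := gauss_le_bound ht (x - y)
    have h2 := gauss_le_bound ht (u - y)
    have h3 := gauss_nonneg t (x - y)
    have h4 := gauss_nonneg t (u - y)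
    rw [abs_le]; constructor <;> simp only [hD] <;> [linarith; linarith]
  -- the main claim
  have main : 0 ≤ ∫ y in Set.Icc (-1 : ℝ) 1, D y * g y := by
    -- layer cake
    have step1 : ∀ y : ℝ, D y * g y =
        ∫ s in Set.Ioo (0:ℝ) 1, Set.indicator (Set.Iio (g y)) (fun _ => D y) s := by
      intro y
      rw [MeasureTheory.setIntegral_indicator measurableSet_Iio]
      have : Set.Ioo (0:ℝ) 1 ∩ Set.Iio (g y) = Set.Ioo 0 (g y) := by
        ext s
        simp only [Set.mem_inter_iff, Set.mem_Ioo, Set.mem_Iio]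
        constructor
        · rintro ⟨⟨h1, _⟩, h3⟩; exact ⟨h1, h3⟩
        · rintro ⟨h1, h2⟩; exact ⟨⟨h1, lt_of_lt_of_le h2 (hg1 y)⟩, h2⟩
      rw [this, MeasureTheory.setIntegral_const, smul_eq_mul, measureReal_def, Real.volume_Ioo, sub_zero,
        ENNReal.toReal_ofReal (hg0 y), mul_comm]
    calc (0:ℝ) ≤ ∫ s in Set.Ioo (0:ℝ) 1, ∫ y in Set.Icc (-1:ℝ) 1,
            Set.indicator (Set.Iio (g y)) (fun _ => D y) s := by
          apply MeasureTheory.setIntegral_nonneg measurableSet_Ioo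
          intro s _
          -- inner integral over a symmetric interval
          have hind : ∀ y : ℝ, Set.indicator (Set.Iio (g y)) (fun _ => D y) s
              = Set.indicator {y : ℝ | s < g y} D y := by
            intro y
            simp only [Set.indicator, Set.mem_Iio, Set.mem_setOf_eq]
          simp_rw [hind]
          rw [MeasureTheory.setIntegral_indicator (measurableSet_lt measurable_const hgm)]
          set A : Set ℝ := {y : ℝ | y ∈ Set.Icc (0:ℝ) 1 ∧ s < g y} with hA
          have hbdd : BddAbove (insert 0 A) := by
            refine ⟨1, ?_⟩
            rintro y (rfl | ⟨⟨_, hy2⟩, _⟩)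
            · exact zero_le_one
            · exact hy2
          set a : ℝ := sSup (insert 0 A) with haDef
          have ha0 : 0 ≤ a := le_csSup hbdd (Set.mem_insert 0 A)
          have ha1 : a ≤ 1 := by
            apply csSup_le (Set.insert_nonempty 0 A)
            rintro y (rfl | ⟨⟨_, hy2⟩, _⟩)
            · exact zero_le_one
            · exact hy2
          have hgabs : ∀ y : ℝ, g |y| = g y := by
            intro y
            rcases abs_choice y with h | h
            · rw [h]
            · rw [h, hgeven]
          have hsub1 : Set.Ioo (-a) a ⊆ Set.Icc (-1:ℝ) 1 ∩ {y : ℝ | s < g y} := by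
            rintro y ⟨hy1, hy2⟩
            have hya : |y| < a := abs_lt.2 ⟨hy1, hy2⟩
            obtain ⟨z, hz, hyz⟩ := exists_lt_of_lt_csSup (Set.insert_nonempty 0 A) hya
            have hz0 : z ∈ A := by
              rcases hz with rfl | hz
              · exact absurd hyz (not_lt.2 (abs_nonneg y))
              · exact hz
            obtain ⟨⟨_, hz1⟩, hzs⟩ := hz0
            refine ⟨⟨?_, ?_⟩, ?_⟩
            · nlinarith [abs_nonneg y, neg_abs_le y]
            · nlinarith [le_abs_self y]
            · have : g |y| ≥ g z := hganti (abs_nonneg y) hyz.le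
              simp only [Set.mem_setOf_eq]
              rw [← hgabs y]
              linarith
          have hsub2 : Set.Icc (-1:ℝ) 1 ∩ {y : ℝ | s < g y} ⊆ Set.Icc (-a) a := by
            rintro y ⟨⟨hy1, hy2⟩, hys⟩
            have : |y| ∈ A := ⟨⟨abs_nonneg y, abs_le.2 ⟨hy1, hy2⟩⟩, by rw [hgabs]; exact hys⟩
            have hya : |y| ≤ a := le_csSup hbdd (Set.mem_insert_of_mem _ this)
            exact ⟨by linarith [neg_abs_le y], le_trans (le_abs_self y) hya⟩
          have hae : (Set.Icc (-1:ℝ) 1 ∩ {y : ℝ | s < g y} : Set ℝ) =ᵐ[volume]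
              (Set.Icc (-a) a : Set ℝ) := by
            rw [Filter.eventuallyEq_set]
            have hnull : volume ({-a, a} : Set ℝ) = 0 :=
              Set.Finite.measure_zero (Set.toFinite _) volume
            rw [← MeasureTheory.compl_mem_ae_iff] at hnull
            filter_upwards [hnull] with y hy
            simp only [Set.mem_compl_iff, Set.mem_insert_iff, Set.mem_singleton_iff,
              not_or] at hy
            constructor
            · intro h; exact hsub2 h
            · intro h
              apply hsub1
              rcases h with ⟨h1, h2⟩
              exact ⟨lt_of_le_of_ne h1 (Ne.symm hy.1), lt_of_le_of_ne h2 hy.2⟩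
          rw [MeasureTheory.setIntegral_congr_set hae]
          have hint1 : IntegrableOn (fun y => gaussDensity t (x - y)) (Set.Icc (-a) a) :=
            (((gauss_continuous t).comp (continuous_const.sub continuous_id))).integrableOn_Icc
          have hint2 : IntegrableOn (fun y => gaussDensity t (u - y)) (Set.Icc (-a) a) :=
            (((gauss_continuous t).comp (continuous_const.sub continuous_id))).integrableOn_Icc
          rw [hD]
          rw [MeasureTheory.integral_sub hint1 hint2]
          have := gauss_interval_anti ht ha0 hx hxu (t := t)
          linarith
      _ = ∫ y in Set.Icc (-1:ℝ) 1, ∫ s in Set.Ioo (0:ℝ) 1,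
            Set.indicator (Set.Iio (g y)) (fun _ => D y) s := by
          apply (MeasureTheory.integral_integral_swap ?_).symm
          haveI : IsFiniteMeasure (volume.restrict (Set.Icc (-1:ℝ) 1)) :=
            ⟨by rw [Measure.restrict_apply_univ, Real.volume_Icc]; exact ENNReal.ofReal_lt_top⟩
          haveI : IsFiniteMeasure (volume.restrict (Set.Ioo (0:ℝ) 1)) :=
            ⟨by rw [Measure.restrict_apply_univ, Real.volume_Ioo]; exact ENNReal.ofReal_lt_top⟩
          have hmeasH : Measurable fun p : ℝ × ℝ =>
              Set.indicator (Set.Iio (g p.1)) (fun _ => D p.1) p.2 := by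
            have h1 : ∀ p : ℝ × ℝ, Set.indicator (Set.Iio (g p.1)) (fun _ => D p.1) p.2
                = if p.2 < g p.1 then D p.1 else 0 := by
              intro p
              by_cases h : p.2 < g p.1
              · rw [Set.indicator_of_mem (Set.mem_Iio.2 h), if_pos h]
              · rw [Set.indicator_of_notMem (by simpa using h), if_neg h]
            simp_rw [h1]
            exact Measurable.ite (measurableSet_lt measurable_snd (hgm.comp measurable_fst))
              (hDmeas.comp measurable_fst) measurable_const
          refine Integrable.mono' (integrable_const (2 * C)) hmeasH.aestronglyMeasurable ?_
          filter_upwards with p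
          simp only [Function.uncurry, Set.indicator_apply]
          split
          · exact hDbound p.1
          · simp only [norm_zero]; positivity
      _ = ∫ y in Set.Icc (-1:ℝ) 1, D y * g y := by
          apply MeasureTheory.setIntegral_congr_fun measurableSet_Icc
          intro y _
          exact (step1 y).symm
  have h1 := integrable_TT ht ⟨hgm, hg0, hg1, hgeven, hganti⟩ x
  have h2 := integrable_TT ht ⟨hgm, hg0, hg1, hgeven, hganti⟩ u
  have : ∫ y in Set.Icc (-1:ℝ) 1, D y * g y = TT t g x - TT t g u := by
    rw [TT, TT, ← MeasureTheory.integral_sub h1 h2]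
    apply MeasureTheory.setIntegral_congr_fun measurableSet_Icc
    intro y _
    simp only [hD]; ring
  linarith [this ▸ main]

lemma TT_meas {t : ℝ} {g : ℝ → ℝ} (hg : Measurable g) : Measurable (TT t g) := by
  have : StronglyMeasurable fun p : ℝ × ℝ => gaussDensity t (p.1 - p.2) * g p.2 :=
    ((((gauss_continuous t).comp (continuous_fst.sub continuous_snd)).measurable).mul
      (hg.comp measurable_snd)).stronglyMeasurable
  exact this.integral_prod_right'.measurable

lemma TT_nonneg {t : ℝ} {g : ℝ → ℝ} (hg : ∀ y, 0 ≤ g y) (x : ℝ) : 0 ≤ TT t g x :=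
  MeasureTheory.setIntegral_nonneg measurableSet_Icc fun y _ =>
    mul_nonneg (gauss_nonneg _ _) (hg y)

lemma TT_le_one {t : ℝ} (ht : 0 < t) {g : ℝ → ℝ} (hQ : QQ g) (x : ℝ) : TT t g x ≤ 1 := by
  obtain ⟨hgm, hg0, hg1, hge, hga⟩ := id hQ
  have hint : Integrable (fun y => gaussDensity t (x - y)) := by
    exact (gauss_integrable ht).comp_sub_left x
  calc TT t g x ≤ ∫ y in Set.Icc (-1:ℝ) 1, gaussDensity t (x - y) := by
        apply MeasureTheory.setIntegral_mono_on (integrable_TT ht hQ x)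
          hint.integrableOn measurableSet_Icc
        intro y _
        calc gaussDensity t (x - y) * g y ≤ gaussDensity t (x - y) * 1 :=
              mul_le_mul_of_nonneg_left (hg1 y) (gauss_nonneg _ _)
          _ = _ := mul_one _
    _ ≤ ∫ y, gaussDensity t (x - y) := by
        apply MeasureTheory.setIntegral_le_integral hint
        filter_upwards with y using gauss_nonneg _ _
    _ = ∫ y, gaussDensity t y := by
        exact MeasureTheory.integral_sub_left_eq_self (gaussDensity t) volume x
    _ = 1 := gauss_integral ht

lemma TT_even {t : ℝ} {g : ℝ → ℝ} (hge : ∀ y, g (-y) = g y) (x : ℝ) :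
    TT t g (-x) = TT t g x := by
  have key : ∀ c : ℝ, TT t g c = ∫ y in (-1:ℝ)..1, gaussDensity t (c - y) * g y := by
    intro c
    rw [TT, MeasureTheory.integral_Icc_eq_integral_Ioc,
      ← intervalIntegral.integral_of_le (by norm_num : (-1:ℝ) ≤ 1)]
  rw [key, key]
  have : ∀ y : ℝ, gaussDensity t (-x - y) * g y
      = (fun y => gaussDensity t (x - y) * g y) (-y) := by
    intro y
    simp only
    rw [hge, show x - -y = -(-x - y) by ring, gauss_even]
  simp_rw [this]
  rw [intervalIntegral.integral_comp_neg (fun y => gaussDensity t (x - y) * g y)]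
  norm_num


noncomputable def iterT : (n : ℕ) → (Fin n → ℝ) → ℝ → ℝ
  | 0, _ => fun _ => 1
  | n + 1, t => TT (t 0) (iterT n (Fin.tail t))


lemma pi_restrict {n : ℕ} (s : Fin n → Set ℝ) (hs : ∀ i, MeasurableSet (s i)) :
    (volume : Measure (Fin n → ℝ)).restrict (Set.pi Set.univ s)
      = Measure.pi (fun i => (volume : Measure ℝ).restrict (s i)) := by
  refine (Measure.pi_eq fun u hu => ?_).symm
  rw [Measure.restrict_apply (MeasurableSet.univ_pi hu), ← Set.pi_inter_distrib,
    volume_pi_pi]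
  simp_rw [Measure.restrict_apply (hu _)]

instance : IsFiniteMeasure ((volume : Measure ℝ).restrict (Set.Icc (-1 : ℝ) 1)) :=
  ⟨by rw [Measure.restrict_apply_univ, Real.volume_Icc]; exact ENNReal.ofReal_lt_top⟩

lemma cont_cons (x : ℝ) {n : ℕ} : Continuous (fun y : Fin n → ℝ => (Fin.cons x y : Fin (n+1) → ℝ)) := by
  refine continuous_pi fun j => ?_
  refine Fin.cases ?_ ?_ j
  · simpa using continuous_const
  · intro k; simpa using continuous_apply k

lemma phi_succ {n : ℕ} (t : Fin (n + 1) → ℝ) (ht : ∀ i, 0 < t i) (x : ℝ) :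
    Phi (n + 1) t x = TT (t 0) (Phi n (Fin.tail t)) x := by
  have hIcc : ∀ m : ℕ, Set.Icc (fun _ : Fin m => (-1 : ℝ)) (fun _ : Fin m => (1 : ℝ))
      = Set.pi Set.univ (fun _ : Fin m => Set.Icc (-1 : ℝ) 1) := fun m =>
    (Set.pi_univ_Icc _ _).symm
  have hres : ∀ m : ℕ, (volume : Measure (Fin m → ℝ)).restrict
        (Set.Icc (fun _ : Fin m => (-1 : ℝ)) (fun _ : Fin m => (1 : ℝ)))
      = Measure.pi (fun _ : Fin m => (volume : Measure ℝ).restrict (Set.Icc (-1:ℝ) 1)) := by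
    intro m
    rw [hIcc, pi_restrict _ (fun _ => measurableSet_Icc)]
  -- the function of the whole path
  set F : (Fin (n + 1) → ℝ) → ℝ := fun y => ∏ i : Fin (n + 1),
    gaussDensity (t i) ((Fin.cons x y : Fin (n + 2) → ℝ) i.castSucc
      - (Fin.cons x y : Fin (n + 2) → ℝ) i.succ) with hF
  have hFcont : Continuous F := by
    apply continuous_finset_prod
    intro i _
    exact (gauss_continuous (t i)).comp
      (((continuous_apply _).comp (cont_cons x)).sub ((continuous_apply _).comp (cont_cons x)))
  have hFbound : ∀ y, ‖F y‖ ≤ ∏ i : Fin (n+1), (Real.sqrt (2 * Real.pi * t i))⁻¹ := by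
    intro y
    rw [Real.norm_eq_abs, abs_of_nonneg (Finset.prod_nonneg fun i _ => gauss_nonneg _ _)]
    exact Finset.prod_le_prod (fun i _ => gauss_nonneg _ _)
      (fun i _ => gauss_le_bound (ht i) _)
  rw [Phi, hres (n + 1)]
  rw [← ((measurePreserving_piFinSuccAbove
      (fun _ : Fin (n+1) => (volume : Measure ℝ).restrict (Set.Icc (-1:ℝ) 1))
      0).symm).integral_comp']
  have hcoe : ⇑((MeasurableEquiv.piFinSuccAbove (fun _ : Fin (n+1) => ℝ) 0).symm)
      = fun p : ℝ × (Fin n → ℝ) => (Fin.cons p.1 p.2 : Fin (n+1) → ℝ) := by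
    ext p : 1
    rw [MeasurableEquiv.piFinSuccAbove_symm_apply]
    simp [Fin.insertNthEquiv, Fin.insertNth_zero]
  rw [hcoe]
  haveI : IsFiniteMeasure (Measure.pi fun _ : Fin n =>
      (volume : Measure ℝ).restrict (Set.Icc (-1:ℝ) 1)) :=
    ⟨by rw [Measure.pi_univ]; exact ENNReal.prod_lt_top fun _ _ => measure_lt_top _ _⟩
  have hint : Integrable (fun p : ℝ × (Fin n → ℝ) => F (Fin.cons p.1 p.2))
      (((volume : Measure ℝ).restrict (Set.Icc (-1:ℝ) 1)).prod
        (Measure.pi fun _ : Fin n => (volume : Measure ℝ).restrict (Set.Icc (-1:ℝ) 1))) := by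
    have hm : Measurable (fun p : ℝ × (Fin n → ℝ) => F (Fin.cons p.1 p.2)) := by
      apply hFcont.measurable.comp
      refine measurable_pi_iff.2 fun j => ?_
      refine Fin.cases ?_ ?_ j
      · simpa using measurable_fst
      · intro k; simpa [Function.comp_def] using (measurable_pi_apply k).comp measurable_snd
    refine Integrable.mono' (integrable_const (∏ i : Fin (n+1), (Real.sqrt (2 * Real.pi * t i))⁻¹))
      hm.aestronglyMeasurable ?_
    filter_upwards with p using hFbound _
  rw [show (fun p : ℝ × (Fin n → ℝ) => ∏ i : Fin (n + 1),
        gaussDensity (t i) ((Fin.cons x (Fin.cons p.1 p.2) : Fin (n+2) → ℝ) i.castSucc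
          - (Fin.cons x (Fin.cons p.1 p.2) : Fin (n+2) → ℝ) i.succ))
      = fun p : ℝ × (Fin n → ℝ) => F (Fin.cons p.1 p.2) from rfl]
  rw [MeasureTheory.integral_prod _ hint]
  rw [TT]
  apply MeasureTheory.setIntegral_congr_fun measurableSet_Icc
  intro a _
  simp only [hF]
  have hsplit : ∀ y' : Fin n → ℝ,
      (∏ i : Fin (n + 1), gaussDensity (t i)
        ((Fin.cons x (Fin.cons a y') : Fin (n+2) → ℝ) i.castSucc
          - (Fin.cons x (Fin.cons a y') : Fin (n+2) → ℝ) i.succ))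
      = gaussDensity (t 0) (x - a) * ∏ j : Fin n, gaussDensity (Fin.tail t j)
          ((Fin.cons a y' : Fin (n+1) → ℝ) j.castSucc
            - (Fin.cons a y' : Fin (n+1) → ℝ) j.succ) := by
    intro y'
    rw [Fin.prod_univ_succ]
    have h0 : gaussDensity (t 0)
        ((Fin.cons x (Fin.cons a y') : Fin (n+2) → ℝ) (Fin.castSucc 0)
          - (Fin.cons x (Fin.cons a y') : Fin (n+2) → ℝ) (Fin.succ 0))
        = gaussDensity (t 0) (x - a) := by simp
    rw [h0]
    congr 1
  simp_rw [hsplit]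
  rw [MeasureTheory.integral_const_mul]
  congr 1
  rw [Phi, hres n]


lemma phi_zero (t : Fin 0 → ℝ) (x : ℝ) : Phi 0 t x = 1 := by
  rw [Phi]
  have huniv : (Set.Icc (fun _ : Fin 0 => (-1:ℝ)) (fun _ : Fin 0 => (1:ℝ)))
      = (Set.univ : Set (Fin 0 → ℝ)) := by
    ext y
    simp only [Set.mem_Icc, Set.mem_univ, iff_true]
    constructor <;> intro i <;> exact i.elim0
  simp only [Finset.univ_eq_empty, Finset.prod_empty, huniv, Measure.restrict_univ,
    MeasureTheory.integral_const, smul_eq_mul, mul_one]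
  rw [measureReal_def, volume_pi, Measure.pi_univ]
  simp

lemma QQ_iterT : ∀ (n : ℕ) (t : Fin n → ℝ), (∀ i, 0 < t i) → QQ (iterT n t)
  | 0, t, ht => ⟨measurable_const, fun _ => zero_le_one, fun _ => le_refl 1,
      fun _ => rfl, fun _ _ _ _ => le_refl 1⟩
  | n+1, t, ht => by
      have hQ := QQ_iterT n (Fin.tail t) (fun i => ht i.succ)
      have ht0 := ht 0
      exact ⟨TT_meas hQ.1, TT_nonneg hQ.2.1, TT_le_one ht0 hQ, TT_even hQ.2.2.2.1,
        fun a c ha hac => TT_anti ht0 hQ ha hac⟩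

lemma Phi_eq : ∀ (n : ℕ) (t : Fin n → ℝ), (∀ i, 0 < t i) → Phi n t = iterT n t
  | 0, t, _ => funext fun x => phi_zero t x
  | n+1, t, ht => by
      funext x
      rw [phi_succ t ht x, iterT]
      rw [Phi_eq n (Fin.tail t) (fun i => ht i.succ)]

/-- `Φ_n` is decreasing on `(0, 1)`. -/
theorem phi_decreasing (n : ℕ) (hn : 0 < n) (t : Fin n → ℝ) (ht : ∀ i, 0 < t i)
    (x u : ℝ) (hx : 0 < x) (hxu : x < u) (hu : u < 1) :
    Phi n t u ≤ Phi n t x := by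
  have hQ := QQ_iterT n t ht
  rw [Phi_eq n t ht]
  exact hQ.2.2.2.2 hx.le hxu.le
end

section
/- For every positive integer n, all real numbers t_1, ..., t_n in (0, ∞), and every x with 0 ≤ x ≤ 1/2, the derivative of Φ_n satisfies Φ_n'(x) ≥ Φ_n'(1 - x). -/
open MeasureTheory Real

namespace PhiAux

lemma integral_comp_sub_left' (f : ℝ → ℝ) (a : ℝ) : (∫ x, f (a - x)) = ∫ x, f x := by
  calc (∫ x, f (a - x)) = ∫ x, f (a + x) := by
        rw [← integral_neg_eq_self (fun x => f (a + x)) volume]; simp [sub_eq_add_neg]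
  _ = _ := integral_add_left_eq_self f a

section Gauss

variable {t : ℝ} (ht : 0 < t)

lemma gauss_nonneg (x : ℝ) : 0 ≤ gaussDensity t x := by
  unfold gaussDensity; positivity

lemma gauss_even (x : ℝ) : gaussDensity t (-x) = gaussDensity t x := by
  unfold gaussDensity; rw [neg_pow]; norm_num

include ht

lemma gauss_le (x : ℝ) : gaussDensity t x ≤ (Real.sqrt (2 * Real.pi * t))⁻¹ := by
  unfold gaussDensity
  have h1 : Real.exp (-x ^ 2 / (2 * t)) ≤ 1 := by
    rw [Real.exp_le_one_iff]
    have : 0 ≤ x ^ 2 / (2 * t) := by positivity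
    rw [neg_div]; linarith
  have h2 : (0:ℝ) ≤ (Real.sqrt (2 * Real.pi * t))⁻¹ := by positivity
  nlinarith

lemma gauss_anti {x y : ℝ} (h : |x| ≤ |y|) : gaussDensity t y ≤ gaussDensity t x := by
  unfold gaussDensity
  have h2 : (0:ℝ) ≤ (Real.sqrt (2 * Real.pi * t))⁻¹ := by positivity
  have hsq : x ^ 2 ≤ y ^ 2 := by rw [← sq_abs x, ← sq_abs y]; exact pow_le_pow_left₀ (abs_nonneg x) h 2
  have hexp : Real.exp (-y ^ 2 / (2 * t)) ≤ Real.exp (-x ^ 2 / (2 * t)) := by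
    apply Real.exp_le_exp.2
    apply div_le_div_of_nonneg_right (by linarith) (by positivity) |>.trans_eq rfl
  nlinarith [Real.exp_pos (-y ^ 2 / (2 * t))]

omit ht in
lemma gauss_continuous : Continuous (gaussDensity t) := by
  unfold gaussDensity
  fun_prop

lemma gauss_integrable : Integrable (gaussDensity t) := by
  unfold gaussDensity
  have : ∀ x : ℝ, -x ^ 2 / (2 * t) = -(1 / (2 * t)) * x ^ 2 := fun x => by ring
  simp_rw [this]
  exact (integrable_exp_neg_mul_sq (by positivity)).const_mul _

lemma gauss_hasDerivAt (z : ℝ) :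
    HasDerivAt (gaussDensity t) (-(z / t) * gaussDensity t z) z := by
  unfold gaussDensity
  have h1 : HasDerivAt (fun z : ℝ => -z ^ 2 / (2 * t)) (-(z / t)) z := by
    have := ((hasDerivAt_pow 2 z).neg).div_const (2 * t)
    refine this.congr_deriv ?_
    field_simp; ring
  have h2 := (h1.exp).const_mul (Real.sqrt (2 * Real.pi * t))⁻¹
  refine h2.congr_deriv ?_
  ring

/-- Global bound for the derivative of the Gaussian density. -/
lemma gauss_deriv_bound (z : ℝ) :
    |(-(z / t)) * gaussDensity t z| ≤ Real.sqrt (2 * t) / t * (Real.sqrt (2 * Real.pi * t))⁻¹ := by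
  have hs : (0:ℝ) < Real.sqrt (2 * t) := Real.sqrt_pos.2 (by linarith)
  have key : |z| * Real.exp (-z ^ 2 / (2 * t)) ≤ Real.sqrt (2 * t) := by
    rcases le_or_gt |z| (Real.sqrt (2 * t)) with h | h
    · calc |z| * Real.exp (-z ^ 2 / (2 * t)) ≤ |z| * 1 := by
            have : Real.exp (-z ^ 2 / (2 * t)) ≤ 1 := by
              rw [Real.exp_le_one_iff, neg_div]
              have : 0 ≤ z ^ 2 / (2 * t) := by positivity
              linarith
            nlinarith [abs_nonneg z]
      _ ≤ Real.sqrt (2 * t) := by rw [mul_one]; exact h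
    · have hz : 0 < |z| := lt_trans hs h
      have hzz : (0:ℝ) < z ^ 2 := by rw [← sq_abs]; exact pow_pos hz 2
      have hq : (0:ℝ) < z ^ 2 / (2 * t) := by positivity
      have hle : z ^ 2 / (2 * t) ≤ Real.exp (z ^ 2 / (2 * t)) := by
        linarith [Real.add_one_le_exp (z ^ 2 / (2 * t))]
      have h2 : Real.exp (-z ^ 2 / (2 * t)) ≤ 2 * t / z ^ 2 := by
        rw [neg_div, Real.exp_neg]
        have := inv_anti₀ hq hle
        calc (Real.exp (z ^ 2 / (2 * t)))⁻¹ ≤ (z ^ 2 / (2 * t))⁻¹ := this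
        _ = 2 * t / z ^ 2 := by rw [inv_div]
      calc |z| * Real.exp (-z ^ 2 / (2 * t)) ≤ |z| * (2 * t / z ^ 2) := by
            exact mul_le_mul_of_nonneg_left h2 (abs_nonneg z)
      _ = 2 * t / |z| := by rw [← sq_abs z]; field_simp
      _ ≤ 2 * t / Real.sqrt (2 * t) := by
            gcongr
      _ = Real.sqrt (2 * t) := by
            rw [eq_comm, eq_div_iff (by positivity), Real.mul_self_sqrt (by linarith)]
  have hrw : |(-(z / t)) * gaussDensity t z|
      = (|z| * Real.exp (-z ^ 2 / (2 * t))) / t * (Real.sqrt (2 * Real.pi * t))⁻¹ := by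
    unfold gaussDensity
    rw [abs_mul, abs_neg, abs_div, abs_mul, abs_of_pos ht, abs_of_nonneg (Real.exp_nonneg _),
      abs_of_nonneg (by positivity : (0:ℝ) ≤ (Real.sqrt (2 * Real.pi * t))⁻¹)]
    ring
  rw [hrw]
  have h2 : (0:ℝ) ≤ (Real.sqrt (2 * Real.pi * t))⁻¹ := by positivity
  apply mul_le_mul_of_nonneg_right _ h2
  gcongr

/-- The Gaussian measure of a symmetric interval around `d` is monotone as the center
moves towards the origin. -/
lemma gauss_interval_mono {d₁ d₂ r : ℝ} (h1 : d₁ ≤ d₂) (h2 : d₂ ≤ 0) (hr : 0 ≤ r) :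
    ∫ v in (d₁ - r)..(d₁ + r), gaussDensity t v ≤ ∫ v in (d₂ - r)..(d₂ + r), gaussDensity t v := by
  have hcont := gauss_continuous (t := t)
  have hii : ∀ a b : ℝ, IntervalIntegrable (gaussDensity t) volume a b :=
    fun a b => hcont.intervalIntegrable a b
  have hii2 : ∀ a b : ℝ, IntervalIntegrable (fun v => gaussDensity t (v - 2 * r)) volume a b :=
    fun a b => (hcont.comp (by continuity)).intervalIntegrable a b
  have key : (∫ v in (d₁ - r)..(d₂ - r), gaussDensity t v)
      ≤ ∫ v in (d₁ + r)..(d₂ + r), gaussDensity t v := by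
    have hshift : (∫ v in (d₁ + r)..(d₂ + r), gaussDensity t (v - 2 * r))
        = ∫ v in (d₁ - r)..(d₂ - r), gaussDensity t v := by
      rw [intervalIntegral.integral_comp_sub_right (gaussDensity t) (2 * r)]
      norm_num
      ring_nf
    rw [← hshift]
    apply intervalIntegral.integral_mono_on (by linarith) (hii2 _ _) (hii _ _)
    intro v hv
    apply gauss_anti ht
    rcases le_total 0 v with h0 | h0
    · rw [abs_of_nonneg h0, abs_of_nonpos (by cases hv; linarith)]
      cases hv; linarith
    · rw [abs_of_nonpos h0, abs_of_nonpos (by cases hv; linarith)]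
      linarith
  have a1 := intervalIntegral.integral_add_adjacent_intervals (hii (d₁ - r) (d₁ + r)) (hii (d₁ + r) (d₂ + r))
  have a2 := intervalIntegral.integral_add_adjacent_intervals (hii (d₁ - r) (d₂ - r)) (hii (d₂ - r) (d₂ + r))
  linarith

end Gauss

/-- Layer-cake argument: if the integral of `D` over every symmetric interval around `c`
is nonnegative weighting by a function whose superlevel sets are symmetric
intervals around `c` preserves nonnegativity. -/
lemma layercake {D Θ : ℝ → ℝ} {B c : ℝ} (hD : Integrable D) (hDm : Measurable D)
    (hΘm : Measurable Θ) (hΘ0 : ∀ u, 0 ≤ Θ u) (hΘB : ∀ u, Θ u ≤ B)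
    (hlevel : ∀ s : ℝ, 0 < s → ∃ r : ℝ, 0 ≤ r ∧
      Set.Ioo (c - r) (c + r) ⊆ {u | s < Θ u} ∧ {u | s < Θ u} ⊆ Set.Icc (c - r) (c + r))
    (hpos : ∀ r : ℝ, 0 ≤ r → 0 ≤ ∫ u in Set.Ioo (c - r) (c + r), D u) :
    0 ≤ ∫ u, D u * Θ u := by
  set ν := volume.restrict (Set.Ioc (0:ℝ) B) with hν
  haveI : IsFiniteMeasure ν := by
    constructor
    rw [hν, Measure.restrict_apply_univ, Real.volume_Ioc]
    exact ENNReal.ofReal_lt_top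
  set F : ℝ → ℝ → ℝ := fun s u => if s < Θ u then D u else 0 with hF
  have hFmeas : Measurable (Function.uncurry F) := by
    apply Measurable.ite _ (hDm.comp measurable_snd) measurable_const
    exact measurableSet_lt measurable_fst (hΘm.comp measurable_snd)
  have hFint : Integrable (Function.uncurry F) (ν.prod volume) := by
    apply Integrable.mono' (g := fun p : ℝ × ℝ => 1 * |D p.2|)
      (Integrable.mul_prod (integrable_const 1) hD.abs) hFmeas.aestronglyMeasurable
    filter_upwards with p
    rcases p with ⟨s, u⟩
    simp only [Function.uncurry, hF, one_mul]
    split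
    · simp
    · simp [abs_nonneg]
  have hswap := integral_integral_swap hFint
  have hinner : ∀ u : ℝ, (∫ s, F s u ∂ν) = D u * Θ u := by
    intro u
    have : (fun s => F s u) = Set.indicator (Set.Iio (Θ u)) (fun _ => D u) := by
      funext s
      simp only [hF, Set.indicator_apply, Set.mem_Iio]
    rw [hν, this, integral_indicator measurableSet_Iio,
      Measure.restrict_restrict measurableSet_Iio]
    have hset : Set.Iio (Θ u) ∩ Set.Ioc 0 B = Set.Ioo 0 (Θ u) := by
      ext s
      simp only [Set.mem_inter_iff, Set.mem_Iio, Set.mem_Ioc, Set.mem_Ioo]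
      constructor
      · rintro ⟨h1, h2, h3⟩; exact ⟨h2, h1⟩
      · rintro ⟨h1, h2⟩; exact ⟨h2, h1, le_trans h2.le (hΘB u)⟩
    rw [hset, setIntegral_const, measureReal_def, Real.volume_Ioo, smul_eq_mul, mul_comm]
    rw [ENNReal.toReal_ofReal (by simpa using hΘ0 u)]
    norm_num
  have houter : 0 ≤ ∫ s, (∫ u, F s u) ∂ν := by
    apply setIntegral_nonneg measurableSet_Ioc
    intro s hs
    obtain ⟨r, hr0, hsub, hsup⟩ := hlevel s hs.1
    have hE : MeasurableSet {u | s < Θ u} := hΘm measurableSet_Ioi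
    have h1 : (fun u => F s u) = Set.indicator {u | s < Θ u} D := by
      funext u
      simp only [hF, Set.indicator_apply, Set.mem_setOf_eq]
    rw [h1, integral_indicator hE]
    have haeeq : {u | s < Θ u} =ᶠ[ae volume] Set.Ioo (c - r) (c + r) := by
      rw [MeasureTheory.ae_eq_set]
      constructor
      · apply measure_mono_null (Set.diff_subset_diff_left hsup)
        apply measure_mono_null (?_ : _ ⊆ ({c - r} ∪ {c + r} : Set ℝ))
        · exact measure_union_null (measure_singleton _) (measure_singleton _)
        · intro u hu
          rcases hu with ⟨⟨hl, hr'⟩, hno⟩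
          simp only [Set.mem_Ioo, not_and, not_lt] at hno
          rcases lt_or_eq_of_le hl with h | h
          · right; simp [le_antisymm (hno h) hr']
          · left; simp [h.symm]
      · rw [Set.diff_eq_empty.2 hsub]
        exact measure_empty
    rw [setIntegral_congr_set haeeq]
    exact hpos r hr0
  rw [hswap] at houter
  calc (0:ℝ) ≤ ∫ u, ∫ s, F s u ∂ν := houter
  _ = ∫ u, D u * Θ u := by congr 1; funext u; exact hinner u

section Conv

variable {t : ℝ} (ht : 0 < t) {Θ : ℝ → ℝ} {B c R : ℝ}

include ht

/-- Integrability of a Gaussian against a bounded measurable weight. -/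
lemma conv_integrable (hΘm : Measurable Θ) (hΘ0 : ∀ u, 0 ≤ Θ u) (hΘB : ∀ u, Θ u ≤ B) (x : ℝ) :
    Integrable (fun u => gaussDensity t (x - u) * Θ u) := by
  have hB0 : 0 ≤ B := le_trans (hΘ0 0) (hΘB 0)
  apply Integrable.mono' (g := fun u => B * gaussDensity t (x - u))
    (((gauss_integrable ht).comp_sub_left x).const_mul B)
  · exact (((gauss_continuous (t := t)).comp (continuous_const.sub continuous_id)).measurable.mul
      hΘm).aestronglyMeasurable
  · filter_upwards with u
    rw [Real.norm_eq_abs, abs_mul, abs_of_nonneg (gauss_nonneg _), abs_of_nonneg (hΘ0 u), mul_comm B]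
    exact mul_le_mul_of_nonneg_left (hΘB u) (gauss_nonneg _)

/-- Key lemma: convolving a symmetric-about-`c`, unimodal, compactly supported weight with a
Gaussian produces a function monotone to the left of `c`. -/
lemma conv_mono (hΘm : Measurable Θ) (hΘ0 : ∀ u, 0 ≤ Θ u) (hΘB : ∀ u, Θ u ≤ B)
    (hsym : ∀ v : ℝ, Θ (c - v) = Θ (c + v))
    (hanti : ∀ v w : ℝ, 0 ≤ v → v ≤ w → Θ (c + w) ≤ Θ (c + v))
    (hsupp : ∀ v : ℝ, R < v → Θ (c + v) = 0)
    {x₁ x₂ : ℝ} (h12 : x₁ ≤ x₂) (h2c : x₂ ≤ c) :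
    (∫ u, gaussDensity t (x₁ - u) * Θ u) ≤ ∫ u, gaussDensity t (x₂ - u) * Θ u := by
  have hΘc : ∀ u : ℝ, Θ u = Θ (c + |u - c|) := by
    intro u
    rcases le_total c u with h | h
    · rw [abs_of_nonneg (by linarith)]; ring_nf
    · rw [abs_of_nonpos (by linarith), ← hsym]; ring_nf
  set D : ℝ → ℝ := fun u => gaussDensity t (x₂ - u) - gaussDensity t (x₁ - u) with hDdef
  have hDm : Measurable D := by
    apply Measurable.sub <;>
      exact ((gauss_continuous (t := t)).comp (continuous_const.sub continuous_id)).measurable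
  have hD : Integrable D :=
    ((gauss_integrable ht).comp_sub_left x₂).sub ((gauss_integrable ht).comp_sub_left x₁)
  have hkey : 0 ≤ ∫ u, D u * Θ u := by
    apply layercake hD hDm hΘm hΘ0 hΘB
    · -- superlevel sets are symmetric intervals
      intro s hs
      by_cases hne : ∃ u, s < Θ u
      · obtain ⟨u₀, hu₀⟩ := hne
        set V : Set ℝ := {v | 0 ≤ v ∧ s < Θ (c + v)} with hV
        have hVne : V.Nonempty := by
          refine ⟨|u₀ - c|, abs_nonneg _, ?_⟩
          rw [← hΘc u₀]; exact hu₀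
        have hVbdd : BddAbove V := by
          refine ⟨R, fun v hv => ?_⟩
          by_contra hcon
          push_neg at hcon
          have h2 := hv.2
          rw [hsupp v hcon] at h2
          linarith
        set r := sSup V with hr
        have hr0 : 0 ≤ r := le_trans hVne.some_mem.1 (le_csSup hVbdd hVne.some_mem)
        refine ⟨r, hr0, ?_, ?_⟩
        · intro u hu
          rcases hu with ⟨hl, hrr⟩
          have habs : |u - c| < r := abs_lt.2 ⟨by linarith, by linarith⟩
          obtain ⟨v', hv'V, hv'⟩ := exists_lt_of_lt_csSup hVne habs
          show s < Θ u
          rw [hΘc u]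
          exact lt_of_lt_of_le hv'V.2 (hanti _ _ (abs_nonneg _) hv'.le)
        · intro u hu
          have : |u - c| ∈ V := ⟨abs_nonneg _, by rw [← hΘc u]; exact hu⟩
          have hle : |u - c| ≤ r := le_csSup hVbdd this
          have := abs_le.1 hle
          exact ⟨by linarith [this.1], by linarith [this.2]⟩
      · push_neg at hne
        refine ⟨0, le_refl _, ?_, ?_⟩
        · intro u hu
          simp only [sub_zero, add_zero] at hu
          exact absurd hu.1 (not_lt.2 hu.2.le)
        · intro u hu
          exact absurd hu (by simpa using not_lt.2 (hne u))
    · -- integral over symmetric intervals is nonneg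
      intro r hr0
      have hle : c - r ≤ c + r := by linarith
      have hii : ∀ x a b : ℝ, IntervalIntegrable (fun u => gaussDensity t (x - u)) volume a b :=
        fun x a b => ((gauss_continuous (t := t)).comp
          (continuous_const.sub continuous_id)).intervalIntegrable a b
      rw [← integral_Ioc_eq_integral_Ioo, ← intervalIntegral.integral_of_le hle]
      rw [hDdef]
      have := intervalIntegral.integral_sub (hii x₂ (c-r) (c+r)) (hii x₁ (c-r) (c+r))
      rw [this]
      have hcomp : ∀ x : ℝ, (∫ u in (c-r)..(c+r), gaussDensity t (x - u))
          = ∫ v in ((x-c)-r)..((x-c)+r), gaussDensity t v := by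
        intro x
        rw [intervalIntegral.integral_comp_sub_left (gaussDensity t) x]
        congr 1 <;> ring
      rw [hcomp x₁, hcomp x₂, sub_nonneg]
      exact gauss_interval_mono ht (by linarith) (by linarith) hr0
  have heq : (∫ u, D u * Θ u)
      = (∫ u, gaussDensity t (x₂ - u) * Θ u) - ∫ u, gaussDensity t (x₁ - u) * Θ u := by
    rw [hDdef]
    simp_rw [sub_mul]
    exact integral_sub (conv_integrable ht hΘm hΘ0 hΘB x₂) (conv_integrable ht hΘm hΘ0 hΘB x₁)
  linarith [hkey, heq.symm.le, heq.le]

end Conv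

/-- The box `[-1,1]^n`. -/
def box (n : ℕ) : Set (Fin n → ℝ) := Set.Icc (fun _ => (-1:ℝ)) (fun _ => 1)

lemma box_measurable (n : ℕ) : MeasurableSet (box n) := measurableSet_Icc

lemma Phi_zero (t : Fin 0 → ℝ) (x : ℝ) : Phi 0 t x = 1 := by
  unfold Phi
  have h1 : Set.Icc (fun _ : Fin 0 => (-1:ℝ)) (fun _ => 1) = Set.univ := by
    apply Set.eq_univ_of_forall
    intro y
    constructor <;> intro i <;> exact absurd i.2 (by omega)
  rw [h1]
  simp only [Finset.univ_eq_empty, Finset.prod_empty]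
  rw [Measure.restrict_univ, integral_const, smul_eq_mul, mul_one]
  have : (volume : Measure (Fin 0 → ℝ)) Set.univ = 1 := by
    rw [volume_pi, Measure.pi_univ]
    simp
  rw [measureReal_def, this]
  simp

lemma cons_apply_continuous {n : ℕ} (x : ℝ) (k : Fin (n+1)) :
    Continuous (fun y : Fin n → ℝ => (Fin.cons x y : Fin (n+1) → ℝ) k) := by
  refine Fin.cases ?_ ?_ k
  · simpa using continuous_const
  · intro j
    simpa using continuous_apply j

lemma phi_integrand_continuous {n : ℕ} (t : Fin n → ℝ) (x : ℝ) :
    Continuous (fun y : Fin n → ℝ => ∏ i : Fin n, gaussDensity (t i)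
      ((Fin.cons x y : Fin (n+1) → ℝ) i.castSucc - (Fin.cons x y : Fin (n+1) → ℝ) i.succ)) := by
  apply continuous_finset_prod
  intro i _
  exact (gauss_continuous (t := t i)).comp
    ((cons_apply_continuous x i.castSucc).sub (cons_apply_continuous x i.succ))

lemma cons_mem_box {n : ℕ} (u : ℝ) (y : Fin n → ℝ) :
    Fin.cons u y ∈ box (n+1) ↔ u ∈ Set.Icc (-1:ℝ) 1 ∧ y ∈ box n := by
  unfold box
  simp only [Set.mem_Icc, Pi.le_def, Fin.forall_fin_succ, Fin.cons_zero, Fin.cons_succ]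
  tauto

/-- The recursion for `Phi`. -/
lemma Phi_succ (n : ℕ) (t : Fin (n+1) → ℝ) (ht : ∀ i, 0 < t i) (x : ℝ) :
    Phi (n+1) t x = ∫ u, gaussDensity (t 0) (x - u)
      * Set.indicator (Set.Icc (-1:ℝ) 1) (Phi n (Fin.tail t)) u := by
  -- the full (n+1)-dimensional integrand, as indicator
  set g : (Fin (n+1) → ℝ) → ℝ := Set.indicator (box (n+1)) (fun y =>
    ∏ i : Fin (n+1), gaussDensity (t i)
      ((Fin.cons x y : Fin (n+2) → ℝ) i.castSucc - (Fin.cons x y : Fin (n+2) → ℝ) i.succ)) with hg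
  have h0 : Phi (n+1) t x = ∫ y, g y := by
    rw [hg, integral_indicator (box_measurable (n+1))]
    rfl
  set e := MeasurableEquiv.piFinSuccAbove (fun _ : Fin (n+1) => ℝ) 0 with he
  have hmp : MeasurePreserving e.symm
      ((volume : Measure ℝ).prod (volume : Measure (Fin n → ℝ))) volume :=
    (volume_preserving_piFinSuccAbove (fun _ : Fin (n+1) => ℝ) 0).symm e
  have hesymm : ∀ (u : ℝ) (y : Fin n → ℝ), e.symm (u, y) = Fin.cons u y := by
    intro u y
    simp [he, MeasurableEquiv.piFinSuccAbove, Fin.insertNthEquiv]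
  have h1 : (∫ y, g y) = ∫ z : ℝ × (Fin n → ℝ), g (e.symm z)
      ∂((volume : Measure ℝ).prod (volume : Measure (Fin n → ℝ))) :=
    (hmp.integral_comp e.symm.measurableEmbedding g).symm
  -- the integrand in product coordinates
  have hprodsplit : ∀ (u : ℝ) (y : Fin n → ℝ),
      (∏ i : Fin (n+1), gaussDensity (t i)
        ((Fin.cons x (Fin.cons u y) : Fin (n+2) → ℝ) i.castSucc
          - (Fin.cons x (Fin.cons u y) : Fin (n+2) → ℝ) i.succ))
      = gaussDensity (t 0) (x - u) * ∏ j : Fin n, gaussDensity (Fin.tail t j)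
          ((Fin.cons u y : Fin (n+1) → ℝ) j.castSucc - (Fin.cons u y : Fin (n+1) → ℝ) j.succ) := by
    intro u y
    have hfst : (Fin.cons x (Fin.cons u y) : Fin (n+2) → ℝ) ((0 : Fin (n+1)).castSucc)
        - (Fin.cons x (Fin.cons u y) : Fin (n+2) → ℝ) ((0 : Fin (n+1)).succ) = x - u := by
      simp
    rw [Fin.prod_univ_succ, hfst]
    exact congrArg _ (Finset.prod_congr rfl fun j _ => by
      rw [← Fin.succ_castSucc]; simp [Fin.tail])
  have hgsplit : ∀ (u : ℝ) (y : Fin n → ℝ), g (Fin.cons u y)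
      = Set.indicator (Set.Icc (-1:ℝ) 1) (fun u' => gaussDensity (t 0) (x - u')) u
        * Set.indicator (box n) (fun y' => ∏ j : Fin n, gaussDensity (Fin.tail t j)
            ((Fin.cons u y' : Fin (n+1) → ℝ) j.castSucc - (Fin.cons u y' : Fin (n+1) → ℝ) j.succ)) y := by
    intro u y
    rw [hg]
    by_cases hu : u ∈ Set.Icc (-1:ℝ) 1 <;> by_cases hy : y ∈ box n
    · rw [Set.indicator_of_mem ((cons_mem_box u y).2 ⟨hu, hy⟩),
        Set.indicator_of_mem hu, Set.indicator_of_mem hy, hprodsplit]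
    · rw [Set.indicator_of_notMem (fun hc => hy ((cons_mem_box u y).1 hc).2),
        Set.indicator_of_notMem hy, mul_zero]
    · rw [Set.indicator_of_notMem (fun hc => hu ((cons_mem_box u y).1 hc).1),
        Set.indicator_of_notMem hu, zero_mul]
    · rw [Set.indicator_of_notMem (fun hc => hu ((cons_mem_box u y).1 hc).1),
        Set.indicator_of_notMem hu, zero_mul]
  -- integrability on the product space
  set C : ℝ := ∏ i : Fin (n+1), (Real.sqrt (2 * Real.pi * t i))⁻¹ with hC
  have hint : Integrable (fun z : ℝ × (Fin n → ℝ) => g (e.symm z))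
      ((volume : Measure ℝ).prod (volume : Measure (Fin n → ℝ))) := by
    have hC0 : 0 ≤ C := Finset.prod_nonneg (fun i _ => by positivity)
    apply Integrable.mono' (g := fun z : ℝ × (Fin n → ℝ) =>
      Set.indicator (Set.Icc (-1:ℝ) 1) (fun _ => C) z.1 * Set.indicator (box n) (fun _ => (1:ℝ)) z.2)
    · apply Integrable.mul_prod
      · exact (integrableOn_const (by rw [Real.volume_Icc]; exact ENNReal.ofReal_ne_top)).integrable_indicator
          measurableSet_Icc
      · exact (integrableOn_const isCompact_Icc.measure_lt_top.ne).integrable_indicator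
          (box_measurable n)
    · -- a.e. strong measurability
      have hgm : Measurable g := by
        rw [hg]
        exact ((phi_integrand_continuous t x).measurable).indicator (box_measurable (n+1))
      exact (hgm.comp e.symm.measurable).aestronglyMeasurable
    · filter_upwards with z
      rcases z with ⟨u, y⟩
      rw [hesymm u y, hgsplit u y]
      by_cases hu : u ∈ Set.Icc (-1:ℝ) 1 <;> by_cases hy : y ∈ box n
      · rw [Set.indicator_of_mem hu, Set.indicator_of_mem hy,
          Set.indicator_of_mem hu, Set.indicator_of_mem hy, mul_one]
        rw [Real.norm_eq_abs, abs_mul, abs_of_nonneg (gauss_nonneg _),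
          abs_of_nonneg (Finset.prod_nonneg (fun j _ => gauss_nonneg _))]
        rw [hC, Fin.prod_univ_succ]
        apply mul_le_mul (gauss_le (ht 0) _) ?_ (Finset.prod_nonneg (fun j _ => gauss_nonneg _)) (by positivity)
        apply Finset.prod_le_prod (fun j _ => gauss_nonneg _)
        intro j _
        exact gauss_le (ht j.succ) _
      all_goals simp [Set.indicator_of_notMem, hu, hy, Set.indicator_of_mem,
        Set.indicator_apply, hC0, mul_nonneg]
  -- apply Fubini
  rw [h0, h1, MeasureTheory.integral_prod _ hint]
  -- compute the inner integral
  have h2 : ∀ u : ℝ, (∫ y : Fin n → ℝ, g (e.symm (u, y)))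
      = gaussDensity (t 0) (x - u) * Set.indicator (Set.Icc (-1:ℝ) 1) (Phi n (Fin.tail t)) u := by
    intro u
    have : ∀ y : Fin n → ℝ, g (e.symm (u, y))
        = Set.indicator (Set.Icc (-1:ℝ) 1) (fun u' => gaussDensity (t 0) (x - u')) u
          * Set.indicator (box n) (fun y' => ∏ j : Fin n, gaussDensity (Fin.tail t j)
              ((Fin.cons u y' : Fin (n+1) → ℝ) j.castSucc - (Fin.cons u y' : Fin (n+1) → ℝ) j.succ)) y := by
      intro y; rw [hesymm u y, hgsplit u y]
    simp_rw [this]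
    rw [integral_const_mul]
    rw [integral_indicator (box_measurable n)]
    have hPhi : (∫ y in box n, ∏ j : Fin n, gaussDensity (Fin.tail t j)
        ((Fin.cons u y : Fin (n+1) → ℝ) j.castSucc - (Fin.cons u y : Fin (n+1) → ℝ) j.succ))
        = Phi n (Fin.tail t) u := rfl
    rw [hPhi]
    by_cases hu : u ∈ Set.Icc (-1:ℝ) 1
    · rw [Set.indicator_of_mem hu, Set.indicator_of_mem hu]
    · rw [Set.indicator_of_notMem hu, Set.indicator_of_notMem hu, zero_mul, mul_zero]
  simp_rw [h2]

/-- The inductive invariant: `Phi n t` is continuous, nonnegative, bounded, even,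
antitone on `[0, ∞)`, and `x ↦ Phi x + Phi (1 - x)` is monotone on `[0, 1/2]`. -/
lemma phi_invariant (n : ℕ) : ∀ (t : Fin n → ℝ), (∀ i, 0 < t i) →
    Continuous (Phi n t) ∧
    (∀ x, 0 ≤ Phi n t x) ∧
    (∃ B : ℝ, ∀ x, Phi n t x ≤ B) ∧
    (∀ x, Phi n t (-x) = Phi n t x) ∧
    (∀ x y : ℝ, 0 ≤ x → x ≤ y → Phi n t y ≤ Phi n t x) ∧
    (∀ x y : ℝ, 0 ≤ x → x ≤ y → y ≤ 1/2 →
      Phi n t x + Phi n t (1-x) ≤ Phi n t y + Phi n t (1-y)) := by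
  induction n with
  | zero =>
    intro t _
    have hP : Phi 0 t = fun _ => (1:ℝ) := funext fun x => Phi_zero t x
    rw [hP]
    exact ⟨continuous_const, fun x => by norm_num, ⟨1, fun x => le_rfl⟩, fun x => rfl,
      fun x y _ _ => le_rfl, fun x y _ _ _ => le_rfl⟩
  | succ n ih =>
    intro t ht
    obtain ⟨hcont, hnn, ⟨B, hB⟩, heven, hanti, hmono⟩ := ih (Fin.tail t) (fun j => ht j.succ)
    have ht0 := ht 0
    set τ := t 0 with hτ
    set Ψ := Phi n (Fin.tail t) with hΨ
    set Θ₀ : ℝ → ℝ := Set.indicator (Set.Icc (-1:ℝ) 1) Ψ with hΘ₀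
    have hB0 : 0 ≤ B := le_trans (hnn 0) (hB 0)
    have hΘ₀m : Measurable Θ₀ := (hcont.measurable).indicator measurableSet_Icc
    have hΘ₀0 : ∀ u, 0 ≤ Θ₀ u := fun u => Set.indicator_apply_nonneg (fun _ => hnn u)
    have hΘ₀B : ∀ u, Θ₀ u ≤ B := by
      intro u
      by_cases hu : u ∈ Set.Icc (-1:ℝ) 1
      · rw [hΘ₀, Set.indicator_of_mem hu]; exact hB u
      · rw [hΘ₀, Set.indicator_of_notMem hu]; exact hB0
    have hΘ₀even : ∀ u : ℝ, Θ₀ (-u) = Θ₀ u := by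
      intro u
      by_cases hu : u ∈ Set.Icc (-1:ℝ) 1
      · have h2 : -u ∈ Set.Icc (-1:ℝ) 1 := by
          simp only [Set.mem_Icc] at hu ⊢; constructor <;> linarith [hu.1, hu.2]
        rw [hΘ₀, Set.indicator_of_mem hu, Set.indicator_of_mem h2]
        exact heven u
      · have h2 : -u ∉ Set.Icc (-1:ℝ) 1 := by
          simp only [Set.mem_Icc] at hu ⊢
          intro hc; exact hu ⟨by linarith [hc.2], by linarith [hc.1]⟩
        rw [hΘ₀, Set.indicator_of_notMem hu, Set.indicator_of_notMem h2]
    have hΘ₀anti : ∀ v w : ℝ, 0 ≤ v → v ≤ w → Θ₀ w ≤ Θ₀ v := by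
      intro v w hv hvw
      by_cases hw : w ∈ Set.Icc (-1:ℝ) 1
      · have hvmem : v ∈ Set.Icc (-1:ℝ) 1 := by
          simp only [Set.mem_Icc] at hw ⊢; exact ⟨by linarith, by linarith [hw.2]⟩
        rw [hΘ₀, Set.indicator_of_mem hw, Set.indicator_of_mem hvmem]
        exact hanti v w hv hvw
      · rw [hΘ₀, Set.indicator_of_notMem hw]
        exact hΘ₀0 v
    have hrep : ∀ x, Phi (n+1) t x = ∫ u, gaussDensity τ (x - u) * Θ₀ u := fun x =>
      Phi_succ n t ht x
    have hΘ₀int : Integrable Θ₀ := by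
      apply IntegrableOn.integrable_indicator _ measurableSet_Icc
      exact hcont.integrableOn_Icc
    -- continuity
    have hcont1 : Continuous (Phi (n+1) t) := by
      have : Phi (n+1) t = fun x => ∫ u, gaussDensity τ (x - u) * Θ₀ u := funext hrep
      rw [this]
      apply continuous_of_dominated (bound := fun u => (Real.sqrt (2 * Real.pi * τ))⁻¹ * Θ₀ u)
      · intro x
        exact (((gauss_continuous (t := τ)).comp
          (continuous_const.sub continuous_id)).measurable.mul hΘ₀m).aestronglyMeasurable
      · intro x
        filter_upwards with u
        rw [Real.norm_eq_abs, abs_mul, abs_of_nonneg (gauss_nonneg _), abs_of_nonneg (hΘ₀0 u)]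
        exact mul_le_mul_of_nonneg_right (gauss_le ht0 _) (hΘ₀0 u)
      · exact hΘ₀int.const_mul _
      · filter_upwards with u
        exact ((gauss_continuous (t := τ)).comp
          ((continuous_id.sub continuous_const))).mul continuous_const
    -- nonnegativity
    have hnn1 : ∀ x, 0 ≤ Phi (n+1) t x := by
      intro x
      rw [hrep]
      exact integral_nonneg (fun u => mul_nonneg (gauss_nonneg _) (hΘ₀0 u))
    -- boundedness
    have hbd1 : ∃ B' : ℝ, ∀ x, Phi (n+1) t x ≤ B' := by
      refine ⟨(Real.sqrt (2 * Real.pi * τ))⁻¹ * (2 * B), ?_⟩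
      intro x
      rw [hrep]
      calc (∫ u, gaussDensity τ (x - u) * Θ₀ u)
          ≤ ∫ u, (Real.sqrt (2 * Real.pi * τ))⁻¹ * Θ₀ u := by
            apply integral_mono (conv_integrable ht0 hΘ₀m hΘ₀0 hΘ₀B x) (hΘ₀int.const_mul _)
            intro u
            exact mul_le_mul_of_nonneg_right (gauss_le ht0 _) (hΘ₀0 u)
      _ = (Real.sqrt (2 * Real.pi * τ))⁻¹ * ∫ u, Θ₀ u := integral_const_mul _ _
      _ ≤ (Real.sqrt (2 * Real.pi * τ))⁻¹ * (2 * B) := by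
            apply mul_le_mul_of_nonneg_left _ (by positivity)
            rw [hΘ₀, integral_indicator measurableSet_Icc]
            calc (∫ u in Set.Icc (-1:ℝ) 1, Ψ u) ≤ ∫ _u in Set.Icc (-1:ℝ) 1, B := by
                  apply setIntegral_mono_on hcont.integrableOn_Icc
                    (integrableOn_const (by
                      rw [Real.volume_Icc]; exact ENNReal.ofReal_ne_top)) measurableSet_Icc
                  intro u _
                  exact hB u
            _ = B * 2 := by
                  rw [setIntegral_const, smul_eq_mul, measureReal_def, Real.volume_Icc]
                  norm_num
                  ring
            _ = 2 * B := by ring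
    -- evenness
    have heven1 : ∀ x, Phi (n+1) t (-x) = Phi (n+1) t x := by
      intro x
      rw [hrep, hrep]
      have hptw : ∀ u : ℝ, gaussDensity τ (-x - u) * Θ₀ u
          = (fun v => gaussDensity τ (x - v) * Θ₀ v) (-u) := by
        intro u
        show gaussDensity τ (-x - u) * Θ₀ u = gaussDensity τ (x - -u) * Θ₀ (-u)
        have h1 : -x - u = -(x - -u) := by ring
        rw [h1, gauss_even, hΘ₀even u]
      calc (∫ u, gaussDensity τ (-x - u) * Θ₀ u)
          = ∫ u, (fun v => gaussDensity τ (x - v) * Θ₀ v) (-u) := by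
            congr 1; funext u; exact hptw u
      _ = ∫ u, gaussDensity τ (x - u) * Θ₀ u :=
            integral_neg_eq_self (fun v => gaussDensity τ (x - v) * Θ₀ v) volume
    -- antitone on [0, ∞)
    have hanti1 : ∀ x y : ℝ, 0 ≤ x → x ≤ y → Phi (n+1) t y ≤ Phi (n+1) t x := by
      intro x y hx hxy
      have := conv_mono (c := (0:ℝ)) (R := 1) ht0 hΘ₀m hΘ₀0 hΘ₀B
        (fun v => by rw [zero_sub, zero_add]; exact hΘ₀even v)
        (fun v w hv hvw => by rw [zero_add, zero_add]; exact hΘ₀anti v w hv hvw)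
        (fun v hv => by
          rw [zero_add, hΘ₀, Set.indicator_of_notMem]
          simp only [Set.mem_Icc]; intro hc; linarith [hc.2])
        (neg_le_neg hxy) (by linarith : -x ≤ (0:ℝ))
      rw [← heven1 x, ← heven1 y, hrep, hrep]
      exact this
    -- the reflection monotonicity
    have hmono1 : ∀ x y : ℝ, 0 ≤ x → x ≤ y → y ≤ 1/2 →
        Phi (n+1) t x + Phi (n+1) t (1-x) ≤ Phi (n+1) t y + Phi (n+1) t (1-y) := by
      set Θ₁ : ℝ → ℝ := fun u => Θ₀ u + Θ₀ (1 - u) with hΘ₁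
      have hΘ₁m : Measurable Θ₁ :=
        hΘ₀m.add (hΘ₀m.comp (measurable_const.sub measurable_id))
      have hΘ₁0 : ∀ u, 0 ≤ Θ₁ u := fun u => add_nonneg (hΘ₀0 u) (hΘ₀0 _)
      have hΘ₁B : ∀ u, Θ₁ u ≤ B + B := fun u => add_le_add (hΘ₀B u) (hΘ₀B _)
      have hrep1 : ∀ x : ℝ, Phi (n+1) t x + Phi (n+1) t (1-x)
          = ∫ u, gaussDensity τ (x - u) * Θ₁ u := by
        intro x
        have hswap : Phi (n+1) t (1-x) = ∫ u, gaussDensity τ (x - u) * Θ₀ (1 - u) := by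
          rw [hrep]
          have := integral_comp_sub_left' (fun u => gaussDensity τ (x - u) * Θ₀ (1 - u)) 1
          rw [← this]
          congr 1
          funext u
          have h1 : x - (1 - u) = -((1 - x) - u) := by ring
          have h2 : (1:ℝ) - (1 - u) = u := by ring
          rw [h1, gauss_even, h2]
        rw [hrep, hswap, hΘ₁]
        rw [← integral_add (conv_integrable ht0 hΘ₀m hΘ₀0 hΘ₀B x)]
        · congr 1; funext u; ring
        · exact conv_integrable ht0 (hΘ₀m.comp (measurable_const.sub measurable_id))
            (fun u => hΘ₀0 _) (fun u => hΘ₀B _) x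
      -- symmetry of Θ₁ about 1/2
      have hΘ₁sym : ∀ v : ℝ, Θ₁ (1/2 - v) = Θ₁ (1/2 + v) := by
        intro v
        simp only [hΘ₁]
        have h1 : (1:ℝ) - (1/2 - v) = 1/2 + v := by ring
        have h2 : (1:ℝ) - (1/2 + v) = 1/2 - v := by ring
        rw [h1, h2, add_comm]
      -- values of Θ₁ to the right of 1/2
      have hΘ₁val : ∀ v : ℝ, 0 ≤ v → Θ₁ (1/2 + v) = Θ₀ (1/2 + v) + Θ₀ (v - 1/2) := by
        intro v hv
        simp only [hΘ₁]
        have h1 : (1:ℝ) - (1/2 + v) = -(v - 1/2) := by ring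
        rw [h1, hΘ₀even]
      -- Θ₁ is antitone to the right of 1/2
      have hΘ₁anti : ∀ v w : ℝ, 0 ≤ v → v ≤ w → Θ₁ (1/2 + w) ≤ Θ₁ (1/2 + v) := by
        have main : ∀ a b : ℝ, 0 ≤ a → a ≤ b → b ≤ 1/2 → Θ₁ (1/2 + b) ≤ Θ₁ (1/2 + a) := by
          intro a b ha hab hb
          rw [hΘ₁val a ha, hΘ₁val b (le_trans ha hab)]
          have hmem : ∀ z : ℝ, -1 ≤ z → z ≤ 1 → Θ₀ z = Ψ z := fun z h1 h2 =>
            Set.indicator_of_mem (Set.mem_Icc.2 ⟨h1, h2⟩) Ψ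
          rw [hmem (1/2 + a) (by linarith) (by linarith), hmem (a - 1/2) (by linarith) (by linarith),
            hmem (1/2 + b) (by linarith) (by linarith), hmem (b - 1/2) (by linarith) (by linarith)]
          have hΨeven : ∀ z : ℝ, Ψ (z - 1/2) = Ψ (1/2 - z) := by
            intro z
            rw [show z - 1/2 = -(1/2 - z) by ring, heven]
          rw [hΨeven a, hΨeven b]
          have := hmono (1/2 - b) (1/2 - a) (by linarith) (by linarith) (by linarith)
          have e1 : (1:ℝ) - (1/2 - b) = 1/2 + b := by ring
          have e2 : (1:ℝ) - (1/2 - a) = 1/2 + a := by ring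
          rw [e1, e2] at this
          linarith
        intro v w hv hvw
        rcases le_or_gt w (1/2) with hw | hw
        · exact main v w hv hvw hw
        · rcases le_or_gt v (1/2) with hv2 | hv2
          · -- v ≤ 1/2 < w
            have h1 : Θ₁ (1/2 + w) ≤ Θ₀ 0 := by
              rw [hΘ₁val w (by linarith)]
              have hz : Θ₀ (1/2 + w) = 0 := by
                rw [hΘ₀, Set.indicator_of_notMem]
                simp only [Set.mem_Icc]; intro hc; linarith [hc.2]
              rw [hz, zero_add]
              exact hΘ₀anti 0 (w - 1/2) le_rfl (by linarith)
            have h2 : Θ₀ 0 ≤ Θ₁ (1/2 + 1/2) := by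
              rw [hΘ₁val (1/2) (by norm_num)]
              have : (1:ℝ)/2 - 1/2 = 0 := by ring
              rw [this]
              have := hΘ₀0 (1/2 + 1/2)
              linarith
            have h3 : Θ₁ (1/2 + 1/2) ≤ Θ₁ (1/2 + v) := main v (1/2) hv hv2 le_rfl
            linarith
          · -- 1/2 < v ≤ w
            rw [hΘ₁val v (by linarith), hΘ₁val w (by linarith)]
            have hz1 : Θ₀ (1/2 + v) = 0 := by
              rw [hΘ₀, Set.indicator_of_notMem]
              simp only [Set.mem_Icc]; intro hc; linarith [hc.2]
            have hz2 : Θ₀ (1/2 + w) = 0 := by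
              rw [hΘ₀, Set.indicator_of_notMem]
              simp only [Set.mem_Icc]; intro hc; linarith [hc.2]
            rw [hz1, hz2, zero_add, zero_add]
            exact hΘ₀anti (v - 1/2) (w - 1/2) (by linarith) (by linarith)
      have hΘ₁supp : ∀ v : ℝ, (3:ℝ)/2 < v → Θ₁ (1/2 + v) = 0 := by
        intro v hv
        rw [hΘ₁val v (by linarith)]
        have hz1 : Θ₀ (1/2 + v) = 0 := by
          rw [hΘ₀, Set.indicator_of_notMem]
          simp only [Set.mem_Icc]; intro hc; linarith [hc.2]
        have hz2 : Θ₀ (v - 1/2) = 0 := by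
          rw [hΘ₀, Set.indicator_of_notMem]
          simp only [Set.mem_Icc]; intro hc; linarith [hc.2]
        rw [hz1, hz2, add_zero]
      intro x y hx hxy hy
      rw [hrep1 x, hrep1 y]
      exact conv_mono (c := (1:ℝ)/2) (R := 3/2) ht0 hΘ₁m hΘ₁0 hΘ₁B
        hΘ₁sym hΘ₁anti hΘ₁supp hxy hy
    exact ⟨hcont1, hnn1, hbd1, heven1, hanti1, hmono1⟩

/-- `Phi (n+1) t` is differentiable everywhere. -/
lemma phi_hasDerivAt (n : ℕ) (t : Fin (n+1) → ℝ) (ht : ∀ i, 0 < t i) (x₀ : ℝ) :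
    ∃ d : ℝ, HasDerivAt (Phi (n+1) t) d x₀ := by
  obtain ⟨hcont, hnn, ⟨B, hB⟩, _, _, _⟩ := phi_invariant n (Fin.tail t) (fun j => ht j.succ)
  have ht0 := ht 0
  set τ := t 0 with hτ
  set Ψ := Phi n (Fin.tail t) with hΨ
  set Θ₀ : ℝ → ℝ := Set.indicator (Set.Icc (-1:ℝ) 1) Ψ with hΘ₀
  have hB0 : 0 ≤ B := le_trans (hnn 0) (hB 0)
  have hΘ₀m : Measurable Θ₀ := (hcont.measurable).indicator measurableSet_Icc
  have hΘ₀0 : ∀ u, 0 ≤ Θ₀ u := fun u => Set.indicator_apply_nonneg (fun _ => hnn u)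
  have hΘ₀B : ∀ u, Θ₀ u ≤ B := by
    intro u
    by_cases hu : u ∈ Set.Icc (-1:ℝ) 1
    · rw [hΘ₀, Set.indicator_of_mem hu]; exact hB u
    · rw [hΘ₀, Set.indicator_of_notMem hu]; exact hB0
  have hΘ₀int : Integrable Θ₀ :=
    IntegrableOn.integrable_indicator hcont.integrableOn_Icc measurableSet_Icc
  have hrep : Phi (n+1) t = fun x => ∫ u, gaussDensity τ (x - u) * Θ₀ u :=
    funext fun x => Phi_succ n t ht x
  set F' : ℝ → ℝ → ℝ := fun x u => (-((x - u) / τ) * gaussDensity τ (x - u)) * Θ₀ u with hF'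
  have hF'meas : AEStronglyMeasurable (F' x₀) volume := by
    apply Measurable.aestronglyMeasurable
    apply Measurable.mul _ hΘ₀m
    exact ((measurable_const.sub measurable_id).div_const τ).neg.mul
      ((gauss_continuous (t := τ)).comp (continuous_const.sub continuous_id)).measurable
  have hFmeas : ∀ᶠ x in nhds x₀,
      AEStronglyMeasurable (fun u => gaussDensity τ (x - u) * Θ₀ u) volume :=
    Filter.Eventually.of_forall fun x =>
      (((gauss_continuous (t := τ)).comp (continuous_const.sub continuous_id)).measurable.mul
        hΘ₀m).aestronglyMeasurable
  have hbound : ∀ᵐ u : ℝ ∂volume, ∀ x ∈ Metric.ball x₀ 1, ‖F' x u‖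
      ≤ (Real.sqrt (2 * τ) / τ * (Real.sqrt (2 * Real.pi * τ))⁻¹) * Θ₀ u := by
    filter_upwards with u
    intro x _
    rw [hF', Real.norm_eq_abs, abs_mul, abs_of_nonneg (hΘ₀0 u)]
    exact mul_le_mul_of_nonneg_right (gauss_deriv_bound ht0 (x - u)) (hΘ₀0 u)
  have hdiff : ∀ᵐ u : ℝ ∂volume, ∀ x ∈ Metric.ball x₀ 1,
      HasDerivAt (fun x => gaussDensity τ (x - u) * Θ₀ u) (F' x u) x := by
    filter_upwards with u
    intro x _
    have h1 : HasDerivAt (fun x : ℝ => x - u) 1 x := (hasDerivAt_id x).sub_const u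
    have h2 := gauss_hasDerivAt ht0 (x - u)
    have h3 := HasDerivAt.comp x h2 h1
    rw [mul_one] at h3
    exact h3.mul_const (Θ₀ u)
  have key := hasDerivAt_integral_of_dominated_loc_of_deriv_le (𝕜 := ℝ)
    (F := fun x u => gaussDensity τ (x - u) * Θ₀ u) (F' := F') (x₀ := x₀) (s := Metric.ball x₀ 1)
    (Metric.ball_mem_nhds x₀ one_pos) hFmeas (conv_integrable ht0 hΘ₀m hΘ₀0 hΘ₀B x₀) hF'meas hbound
    (hΘ₀int.const_mul _) hdiff
  refine ⟨∫ u, F' x₀ u, ?_⟩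
  rw [hrep]
  exact key.2

end PhiAux

/-- For `0 ≤ x ≤ 1/2`, `Φ_n'(x) ≥ Φ_n'(1 - x)`. -/
theorem phi_deriv_reflection (n : ℕ) (hn : 0 < n) (t : Fin n → ℝ) (ht : ∀ i, 0 < t i)
    (x : ℝ) (hx0 : 0 ≤ x) (hx : x ≤ 1 / 2) :
    deriv (Phi n t) (1 - x) ≤ deriv (Phi n t) x := by
  obtain ⟨m, rfl⟩ : ∃ m, n = m + 1 := ⟨n - 1, by omega⟩
  rcases eq_or_lt_of_le hx with heq | hlt
  · have h1 : 1 - x = x := by rw [heq]; norm_num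
    rw [h1]
  · obtain ⟨-, -, -, -, -, hmono⟩ := PhiAux.phi_invariant (m + 1) t ht
    obtain ⟨d₁, hd₁⟩ := PhiAux.phi_hasDerivAt m t ht x
    obtain ⟨d₂, hd₂⟩ := PhiAux.phi_hasDerivAt m t ht (1 - x)
    have hinner : HasDerivAt (fun y : ℝ => 1 - y) (-1) x := by
      simpa using (hasDerivAt_id x).const_sub 1
    have hcomp : HasDerivAt (fun y : ℝ => Phi (m + 1) t (1 - y)) (d₂ * (-1)) x :=
      HasDerivAt.comp x hd₂ hinner
    have hψ : HasDerivAt (fun y : ℝ => Phi (m + 1) t y + Phi (m + 1) t (1 - y)) (d₁ - d₂) x := by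
      have := hd₁.add hcomp
      exact this.congr_deriv (by ring)
    have htend : Filter.Tendsto (slope (fun y : ℝ => Phi (m + 1) t y + Phi (m + 1) t (1 - y)) x)
        (nhdsWithin x (Set.Ioi x)) (nhds (d₁ - d₂)) := by
      apply (hasDerivAt_iff_tendsto_slope.1 hψ).mono_left
      apply nhdsWithin_mono
      intro y hy
      exact ne_of_gt hy
    have hev : ∀ᶠ y in nhdsWithin x (Set.Ioi x),
        0 ≤ slope (fun y : ℝ => Phi (m + 1) t y + Phi (m + 1) t (1 - y)) x y := by
      filter_upwards [Ioc_mem_nhdsGT_of_mem (Set.mem_Ico.2 ⟨le_refl x, hlt⟩)]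
      intro y hy
      rw [slope_def_field]
      apply div_nonneg _ (by linarith [hy.1] : (0:ℝ) ≤ y - x)
      have := hmono x y hx0 hy.1.le hy.2
      linarith
    have hd : 0 ≤ d₁ - d₂ := ge_of_tendsto htend hev
    rw [hd₁.deriv, hd₂.deriv]
    linarith
end

section
/- Let d ≥ 1, let a_1, ..., a_d > 0, and let 0 < t_1 < ⋯ < t_n. For each j = 1, ..., d define F_j : ℝ → ℝ by F_j(x) = ∫_{-a_j}^{a_j} ⋯ ∫_{-a_j}^{a_j} ∏_{i=1}^{n} p_{t_i - t_{i-1}}(x_{i-1} - x_i) dx_1 ⋯ dx_n, where x_0 = x and t_0 = 0, and define F : ℝ^d → ℝ by F(x_1, ..., x_d) = ∏_{j=1}^{d} F_j(x_j). Then for every coordinate index j and every fixed choice of the other coordinates (x_k)_{k ≠ j} with x_k ∈ (-a_k, a_k), the function x_j ↦ F(x) is concave on (-a_j/2, a_j/2), is nondecreasing on (-a_j, 0), and is nonincreasing on (0, a_j). (F(x) equals P_x{B_{t_1} ∈ Q, ..., B_{t_n} ∈ Q} for d-dimensional Brownian motion started at x, where Q = ∏_j (-a_j, a_j).) -/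
set_option maxHeartbeats 1000000

open MeasureTheory Real

/-- `F_j(x) = ∫_{-a}^{a} ⋯ ∫_{-a}^{a} ∏_{i=1}^{n} p_{t_i - t_{i-1}}(x_{i-1} - x_i) dx_1 ⋯ dx_n`,
with `x_0 = x` and `t_0 = 0` (here with half-width `a`). -/
noncomputable def brownianFDD1 (n : ℕ) (a : ℝ) (t : Fin n → ℝ) (x : ℝ) : ℝ :=
  ∫ y in Set.Icc (fun _ : Fin n => -a) (fun _ : Fin n => a),
    ∏ i : Fin n,
      gaussDensity
        ((Fin.cons 0 t : Fin (n + 1) → ℝ) i.succ - (Fin.cons 0 t : Fin (n + 1) → ℝ) i.castSucc)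
        ((Fin.cons x y : Fin (n + 1) → ℝ) i.castSucc - (Fin.cons x y : Fin (n + 1) → ℝ) i.succ)

/-- `F(x) = ∏_{j=1}^{d} F_j(x_j)`, the finite-dimensional distribution
`P_x{B_{t_1} ∈ Q, ..., B_{t_n} ∈ Q}` of `d`-dimensional Brownian motion,
where `Q = ∏_j (-a_j, a_j)`. -/
noncomputable def brownianFDDd (d n : ℕ) (a : Fin d → ℝ) (t : Fin n → ℝ)
    (x : Fin d → ℝ) : ℝ :=
  ∏ j : Fin d, brownianFDD1 n (a j) t (x j)

namespace BddBox

variable {τ a : ℝ}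




lemma gauss_nonneg (τ x : ℝ) : 0 ≤ gaussDensity τ x := by
  unfold gaussDensity
  positivity

lemma gauss_even (τ x : ℝ) : gaussDensity τ (-x) = gaussDensity τ x := by
  simp [gaussDensity]

lemma gauss_anti (hτ : 0 < τ) {x y : ℝ} (h : x ^ 2 ≤ y ^ 2) :
    gaussDensity τ y ≤ gaussDensity τ x := by
  unfold gaussDensity
  have h1 : Real.exp (-y ^ 2 / (2 * τ)) ≤ Real.exp (-x ^ 2 / (2 * τ)) := by
    apply Real.exp_le_exp.2
    apply div_le_div_of_nonneg_right ?_ (by positivity) |>.trans_eq rfl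
    · linarith
  have h2 : (0:ℝ) ≤ (Real.sqrt (2 * Real.pi * τ))⁻¹ := by positivity
  exact mul_le_mul_of_nonneg_left h1 h2

lemma gauss_le_peak (hτ : 0 < τ) (x : ℝ) : gaussDensity τ x ≤ gaussDensity τ 0 :=
  gauss_anti hτ (by nlinarith [sq_nonneg x])

lemma continuous_gauss (τ : ℝ) : Continuous (gaussDensity τ) := by
  unfold gaussDensity
  fun_prop

lemma hasDerivAt_gauss (hτ : 0 < τ) (x : ℝ) :
    HasDerivAt (gaussDensity τ) (-(x / τ) * gaussDensity τ x) x := by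
  have h1 : HasDerivAt (fun x : ℝ => -x ^ 2 / (2 * τ)) (-(x / τ)) x := by
    have := ((hasDerivAt_pow 2 x).neg).div_const (2 * τ)
    refine this.congr_deriv ?_
    field_simp
    ring
  have h2 := (h1.exp).const_mul ((Real.sqrt (2 * Real.pi * τ))⁻¹)
  refine h2.congr_deriv ?_
  unfold gaussDensity; ring

lemma integrable_gauss (hτ : 0 < τ) : Integrable (gaussDensity τ) := by
  have : gaussDensity τ = fun x => (Real.sqrt (2 * Real.pi * τ))⁻¹ *
      Real.exp (-(1 / (2 * τ)) * x ^ 2) := by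
    funext x
    unfold gaussDensity
    congr 1
    ring_nf
  rw [this]
  exact (integrable_exp_neg_mul_sq (by positivity)).const_mul _

lemma integral_gauss (hτ : 0 < τ) : ∫ x : ℝ, gaussDensity τ x = 1 := by
  have h1 : ∫ x : ℝ, Real.exp (-(1 / (2 * τ)) * x ^ 2) = Real.sqrt (π / (1 / (2 * τ))) :=
    integral_gaussian _
  have h2 : ∫ x : ℝ, gaussDensity τ x
      = (Real.sqrt (2 * Real.pi * τ))⁻¹ * ∫ x : ℝ, Real.exp (-(1 / (2 * τ)) * x ^ 2) := by
    rw [← integral_const_mul]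
    congr 1; funext x
    unfold gaussDensity
    congr 2
    ring
  rw [h2, h1]
  have h3 : π / (1 / (2 * τ)) = 2 * π * τ := by field_simp
  rw [h3]
  rw [inv_mul_cancel₀]
  positivity






/-- The one-step operator. -/
noncomputable def T (τ a : ℝ) (F : ℝ → ℝ) (x : ℝ) : ℝ :=
  ∫ y in (-a)..a, gaussDensity τ (x - y) * F y

/-- Induction invariant. -/
structure INV (a : ℝ) (F : ℝ → ℝ) : Prop where
  cont : Continuous F
  diff : Differentiable ℝ F
  dcont : Continuous (deriv F)
  even : ∀ x, F (-x) = F x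
  nonneg : ∀ x, 0 ≤ F x
  le_one : ∀ x, F x ≤ 1
  spair : ∀ α β : ℝ, 0 ≤ β → β ≤ α → α + β ≤ a → deriv F α ≤ deriv F β

lemma INV.deriv_odd (h : INV a F) (x : ℝ) : deriv F (-x) = -deriv F x := by
  have h1 : HasDerivAt (fun y : ℝ => F (-y)) (deriv F (-x) * (-1)) x :=
    HasDerivAt.comp x ((h.diff (-x)).hasDerivAt) (hasDerivAt_neg x)
  have h2 : (fun y : ℝ => F (-y)) = F := funext h.even
  rw [h2] at h1
  have h3 := h1.deriv
  have h4 := ((h.diff x).hasDerivAt).deriv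
  linarith [h3, h4]

lemma INV.deriv_zero (h : INV a F) : deriv F 0 = 0 := by
  have := h.deriv_odd 0
  simp at this
  linarith

lemma INV.deriv_nonpos (h : INV a F) {x : ℝ} (hx0 : 0 ≤ x) (hxa : x ≤ a) :
    deriv F x ≤ 0 := by
  have := h.spair x 0 le_rfl hx0 (by linarith)
  rwa [h.deriv_zero] at this

lemma abs_mul_gauss_bound (hτ : 0 < τ) (u : ℝ) :
    |u| * Real.exp (-u ^ 2 / (2 * τ)) ≤ Real.sqrt (2 * τ) := by
  have hs : (0:ℝ) < Real.sqrt (2 * τ) := Real.sqrt_pos.2 (by linarith)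
  have hsq : Real.sqrt (2 * τ) ^ 2 = 2 * τ := Real.sq_sqrt (by linarith)
  rcases le_or_gt |u| (Real.sqrt (2 * τ)) with hle | hgt
  · calc |u| * Real.exp (-u ^ 2 / (2 * τ)) ≤ |u| * 1 := by
          apply mul_le_mul_of_nonneg_left _ (abs_nonneg u)
          rw [Real.exp_le_one_iff]
          apply div_nonpos_of_nonpos_of_nonneg (by nlinarith [sq_nonneg u]) (by linarith)
      _ ≤ Real.sqrt (2 * τ) := by rwa [mul_one]
  · have hu : 0 < |u| := hs.trans hgt
    have hu2 : 0 < u ^ 2 := by rw [← sq_abs]; positivity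
    have hv : 0 < u ^ 2 / (2 * τ) := by positivity
    have hveexp : u ^ 2 / (2 * τ) ≤ Real.exp (u ^ 2 / (2 * τ)) := by
      linarith [Real.add_one_le_exp (u ^ 2 / (2 * τ))]
    have hexp : Real.exp (-(u ^ 2 / (2 * τ))) ≤ (u ^ 2 / (2 * τ))⁻¹ := by
      rw [Real.exp_neg]
      exact inv_anti₀ hv hveexp
    calc |u| * Real.exp (-u ^ 2 / (2 * τ))
        = |u| * Real.exp (-(u ^ 2 / (2 * τ))) := by rw [neg_div]
      _ ≤ |u| * (u ^ 2 / (2 * τ))⁻¹ := mul_le_mul_of_nonneg_left hexp (abs_nonneg u)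
      _ = 2 * τ / |u| := by
          rw [← sq_abs u]
          field_simp
      _ ≤ Real.sqrt (2 * τ) := by
          rw [div_le_iff₀ hu]
          nlinarith [hgt.le]

/-- global bound for the `x`-derivative of the Gaussian kernel. -/
noncomputable def Cg (τ : ℝ) : ℝ := Real.sqrt (2 * τ) / τ * (Real.sqrt (2 * Real.pi * τ))⁻¹

lemma gauss_deriv_norm_bound (hτ : 0 < τ) (u : ℝ) :
    ‖-(u / τ) * gaussDensity τ u‖ ≤ Cg τ := by
  have hc : (0:ℝ) ≤ (Real.sqrt (2 * Real.pi * τ))⁻¹ := by positivity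
  have h1 : ‖-(u / τ) * gaussDensity τ u‖
      = (Real.sqrt (2 * Real.pi * τ))⁻¹ / τ * (|u| * Real.exp (-u ^ 2 / (2 * τ))) := by
    unfold gaussDensity
    rw [Real.norm_eq_abs, abs_mul, abs_neg, abs_div, abs_of_pos hτ, abs_mul,
      abs_of_nonneg hc, abs_of_nonneg (Real.exp_pos _).le]
    ring
  rw [h1]
  have h2 := abs_mul_gauss_bound hτ u
  have h3 : (0:ℝ) ≤ (Real.sqrt (2 * Real.pi * τ))⁻¹ / τ := by positivity
  calc (Real.sqrt (2 * Real.pi * τ))⁻¹ / τ * (|u| * Real.exp (-u ^ 2 / (2 * τ)))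
      ≤ (Real.sqrt (2 * Real.pi * τ))⁻¹ / τ * Real.sqrt (2 * τ) :=
        mul_le_mul_of_nonneg_left h2 h3
    _ = Cg τ := by unfold Cg; ring

lemma continuous_Tker (hFc : Continuous F) :
    Continuous (fun p : ℝ × ℝ => -((p.1 - p.2) / τ) * gaussDensity τ (p.1 - p.2) * F p.2) := by
  apply Continuous.mul
  · apply Continuous.mul
    · fun_prop
    · exact (continuous_gauss τ).comp (continuous_fst.sub continuous_snd)
  · exact hFc.comp continuous_snd

lemma hasDerivAt_T (hτ : 0 < τ) (ha : 0 < a) {F : ℝ → ℝ} (hFc : Continuous F)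
    (hF0 : ∀ y, 0 ≤ F y) (hF1 : ∀ y, F y ≤ 1) (x : ℝ) :
    HasDerivAt (T τ a F)
      (∫ y in (-a)..a, -((x - y) / τ) * gaussDensity τ (x - y) * F y) x := by
  have hgc : Continuous (fun p : ℝ × ℝ => gaussDensity τ (p.1 - p.2) * F p.2) :=
    ((continuous_gauss τ).comp (continuous_fst.sub continuous_snd)).mul (hFc.comp continuous_snd)
  set μ : Measure ℝ := volume.restrict (Set.uIoc (-a) a) with hμ
  have key : HasDerivAt (fun x => ∫ y, gaussDensity τ (x - y) * F y ∂μ)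
      (∫ y, -((x - y) / τ) * gaussDensity τ (x - y) * F y ∂μ) x := by
    have hFb : ∀ y : ℝ, |F y| ≤ 1 := fun y => abs_le.2 ⟨by linarith [hF0 y], hF1 y⟩
    refine (hasDerivAt_integral_of_dominated_loc_of_deriv_le (Metric.ball_mem_nhds x one_pos)
      (F := fun x y => gaussDensity τ (x - y) * F y)
      (F' := fun x y => -((x - y) / τ) * gaussDensity τ (x - y) * F y)
      (bound := fun _ => Cg τ) ?_ ?_ ?_ ?_ ?_ ?_).2
    · exact Filter.Eventually.of_forall fun x' =>
        (hgc.comp (continuous_const.prodMk continuous_id)).aestronglyMeasurable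
    · exact ((hgc.comp (continuous_const.prodMk
        continuous_id)).intervalIntegrable (μ := volume) (-a) a).def'
    · exact ((continuous_Tker hFc).comp
        (continuous_const.prodMk continuous_id)).aestronglyMeasurable
    · refine Filter.Eventually.of_forall fun y => fun x' _ => ?_
      calc ‖-((x' - y) / τ) * gaussDensity τ (x' - y) * F y‖
          = ‖-((x' - y) / τ) * gaussDensity τ (x' - y)‖ * |F y| := by
            rw [norm_mul]; rfl
        _ ≤ Cg τ * 1 :=
            mul_le_mul (gauss_deriv_norm_bound hτ _) (hFb y) (abs_nonneg _)
              (le_trans (norm_nonneg _) (gauss_deriv_norm_bound hτ 0))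
        _ = Cg τ := mul_one _
    · have : IntegrableOn (fun _ : ℝ => Cg τ) (Set.uIoc (-a) a) volume :=
        integrableOn_const (by rw [Set.uIoc]; exact measure_Ioc_lt_top.ne)
      exact this
    · refine Filter.Eventually.of_forall fun y => fun x' _ => ?_
      have h0 := HasDerivAt.comp (𝕜 := ℝ) x' (hasDerivAt_gauss hτ (x' - y))
        ((hasDerivAt_id x').sub_const y)
      have h1 : HasDerivAt (fun z : ℝ => gaussDensity τ (z - y))
          (-((x' - y) / τ) * gaussDensity τ (x' - y) * 1) x' := h0
      simpa [mul_one] using h1.mul_const (F y)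
  have e1 : T τ a F = fun x => ∫ y, gaussDensity τ (x - y) * F y ∂μ := by
    funext x'
    rw [T, intervalIntegral.intervalIntegral_eq_integral_uIoc,
      if_pos (by linarith : (-a:ℝ) ≤ a), one_smul]
  rw [e1, intervalIntegral.intervalIntegral_eq_integral_uIoc,
    if_pos (by linarith : (-a:ℝ) ≤ a), one_smul]
  exact key

lemma deriv_T (hτ : 0 < τ) (ha : 0 < a) {F : ℝ → ℝ} (hFc : Continuous F)
    (hF0 : ∀ y, 0 ≤ F y) (hF1 : ∀ y, F y ≤ 1) (x : ℝ) :
    deriv (T τ a F) x = ∫ y in (-a)..a, -((x - y) / τ) * gaussDensity τ (x - y) * F y :=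
  (hasDerivAt_T hτ ha hFc hF0 hF1 x).deriv

lemma deriv_T_rep (hτ : 0 < τ) (ha : 0 < a) {F : ℝ → ℝ} (hF : INV a F) (x : ℝ) :
    deriv (T τ a F) x = F a * (gaussDensity τ (x + a) - gaussDensity τ (x - a))
      + ∫ y in (-a)..a, deriv F y * gaussDensity τ (x - y) := by
  rw [deriv_T hτ ha hF.cont hF.nonneg hF.le_one x]
  have hu : ∀ y ∈ Set.uIcc (-a) a, HasDerivAt F (deriv F y) y :=
    fun y _ => (hF.diff y).hasDerivAt
  have hv : ∀ y ∈ Set.uIcc (-a) a, HasDerivAt (fun z : ℝ => gaussDensity τ (x - z))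
      (((x - y) / τ) * gaussDensity τ (x - y)) y := by
    intro y _
    have h0 := HasDerivAt.comp (𝕜 := ℝ) y (hasDerivAt_gauss hτ (x - y))
      ((hasDerivAt_id y).const_sub x)
    have h1 : HasDerivAt (fun z : ℝ => gaussDensity τ (x - z))
        (-((x - y) / τ) * gaussDensity τ (x - y) * (-1)) y := h0
    convert h1 using 1
    ring
  have hu' : IntervalIntegrable (deriv F) volume (-a) a := hF.dcont.intervalIntegrable _ _
  have hv' : IntervalIntegrable (fun y => ((x - y) / τ) * gaussDensity τ (x - y))
      volume (-a) a := by
    apply Continuous.intervalIntegrable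
    exact (((continuous_const.sub continuous_id).div_const τ).mul
      ((continuous_gauss τ).comp (continuous_const.sub continuous_id)))
  have hIBP := intervalIntegral.integral_mul_deriv_eq_deriv_mul hu hv hu' hv'
  have e1 : (∫ y in (-a)..a, -((x - y) / τ) * gaussDensity τ (x - y) * F y)
      = -∫ y in (-a)..a, F y * (((x - y) / τ) * gaussDensity τ (x - y)) := by
    rw [← intervalIntegral.integral_neg]
    apply intervalIntegral.integral_congr
    intro y _
    ring
  have e3 : x - -a = x + a := by ring
  rw [e3] at hIBP
  rw [e1, hIBP, hF.even a]
  ring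

lemma T_spair (hτ : 0 < τ) (ha : 0 < a) {F : ℝ → ℝ} (hF : INV a F) :
    ∀ α β : ℝ, 0 ≤ β → β ≤ α → α + β ≤ a →
      deriv (T τ a F) α ≤ deriv (T τ a F) β := by
  intro α β hβ0 hβα hsum
  have hα0 : 0 ≤ α := le_trans hβ0 hβα
  have hαa : α ≤ a := by linarith
  rw [deriv_T_rep hτ ha hF α, deriv_T_rep hτ ha hF β]
  have hb : F a * (gaussDensity τ (α + a) - gaussDensity τ (α - a))
      ≤ F a * (gaussDensity τ (β + a) - gaussDensity τ (β - a)) := by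
    apply mul_le_mul_of_nonneg_left _ (hF.nonneg a)
    have h1 : gaussDensity τ (α + a) ≤ gaussDensity τ (β + a) :=
      gauss_anti hτ (by nlinarith)
    have h2 : gaussDensity τ (β - a) ≤ gaussDensity τ (α - a) :=
      gauss_anti hτ (by nlinarith)
    linarith
  suffices M : (∫ y in (-a)..a, deriv F y * gaussDensity τ (α - y))
      ≤ ∫ y in (-a)..a, deriv F y * gaussDensity τ (β - y) by linarith
  -- reduce to the folded inequality
  set G : ℝ → ℝ := fun y => gaussDensity τ (α - y) - gaussDensity τ (β - y)
    - gaussDensity τ (α + y) + gaussDensity τ (β + y) with hG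
  have hGcont : Continuous G := by
    apply Continuous.add
    apply Continuous.sub
    apply Continuous.sub
    all_goals
      first
      | exact (continuous_gauss τ).comp (continuous_const.sub continuous_id)
      | exact (continuous_gauss τ).comp (continuous_const.add continuous_id)
  have hDcont : ∀ c : ℝ, Continuous fun y => deriv F y * (gaussDensity τ (c - y)) :=
    fun c => hF.dcont.mul ((continuous_gauss τ).comp (continuous_const.sub continuous_id))
  have hii : ∀ (c u v : ℝ), IntervalIntegrable
      (fun y => deriv F y * gaussDensity τ (c - y)) volume u v :=
    fun c u v => (hDcont c).intervalIntegrable u v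
  have hGii : ∀ u v : ℝ, IntervalIntegrable (fun y => deriv F y * G y) volume u v :=
    fun u v => (hF.dcont.mul hGcont).intervalIntegrable u v
  have hplus : ∀ c : ℝ, Continuous fun y => deriv F y * gaussDensity τ (c + y) :=
    fun c => hF.dcont.mul ((continuous_gauss τ).comp (continuous_const.add continuous_id))
  have hiip : ∀ (c u v : ℝ), IntervalIntegrable
      (fun y => deriv F y * gaussDensity τ (c + y)) volume u v :=
    fun c u v => (hplus c).intervalIntegrable u v
  have s1 : ∀ c : ℝ, (∫ y in (-a)..a, deriv F y * gaussDensity τ (c - y))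
      = (∫ y in (-a)..(0:ℝ), deriv F y * gaussDensity τ (c - y))
        + ∫ y in (0:ℝ)..a, deriv F y * gaussDensity τ (c - y) :=
    fun c => (intervalIntegral.integral_add_adjacent_intervals
      (hii c (-a) 0) (hii c 0 a)).symm
  have s2 : ∀ c : ℝ, (∫ y in (-a)..(0:ℝ), deriv F y * gaussDensity τ (c - y))
      = - ∫ y in (0:ℝ)..a, deriv F y * gaussDensity τ (c + y) := by
    intro c
    have h3 : (∫ y in (0:ℝ)..a,
        (fun u => deriv F u * gaussDensity τ (c - u)) (-y))
        = ∫ y in (-a)..(-(0:ℝ)), deriv F y * gaussDensity τ (c - y) :=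
      intervalIntegral.integral_comp_neg (fun u => deriv F u * gaussDensity τ (c - u))
    rw [neg_zero] at h3
    rw [← h3, ← intervalIntegral.integral_neg]
    apply intervalIntegral.integral_congr
    intro y _
    have hodd : deriv F (-y) = -deriv F y := hF.deriv_odd y
    simp only [hodd]
    rw [show c - -y = c + y by ring]
    ring
  have expand : (∫ y in (0:ℝ)..a, deriv F y * G y)
      = ((∫ y in (0:ℝ)..a, deriv F y * gaussDensity τ (α - y))
          - ∫ y in (0:ℝ)..a, deriv F y * gaussDensity τ (β - y))
        - ((∫ y in (0:ℝ)..a, deriv F y * gaussDensity τ (α + y))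
          - ∫ y in (0:ℝ)..a, deriv F y * gaussDensity τ (β + y)) := by
    rw [← intervalIntegral.integral_sub (hii α 0 a) (hii β 0 a),
      ← intervalIntegral.integral_sub (hiip α 0 a) (hiip β 0 a),
      ← intervalIntegral.integral_sub ((hii α 0 a).sub (hii β 0 a))
        ((hiip α 0 a).sub (hiip β 0 a))]
    apply intervalIntegral.integral_congr
    intro y _
    simp only [hG]
    ring
  have fold : (∫ y in (-a)..a, deriv F y * gaussDensity τ (α - y))
      - (∫ y in (-a)..a, deriv F y * gaussDensity τ (β - y))
      = ∫ y in (0:ℝ)..a, deriv F y * G y := by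
    rw [s1 α, s1 β, s2 α, s2 β, expand]
    ring
  -- now show the folded integral is ≤ 0
  set c : ℝ := α + β with hc
  have hc0 : 0 ≤ c := by rw [hc]; linarith
  have hca : c ≤ a := by rw [hc]; linarith
  -- pointwise facts about G
  have hGpos : ∀ z : ℝ, c / 2 ≤ z → 0 ≤ G z := by
    intro z hz
    rw [hc] at hz
    have h1 : gaussDensity τ (β - z) ≤ gaussDensity τ (α - z) := by
      apply gauss_anti hτ
      nlinarith [mul_nonneg (sub_nonneg.2 hβα) (by linarith : (0:ℝ) ≤ 2 * z - (α + β))]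
    have h2 : gaussDensity τ (α + z) ≤ gaussDensity τ (β + z) := by
      apply gauss_anti hτ
      nlinarith [mul_nonneg (sub_nonneg.2 hβα) (by linarith : (0:ℝ) ≤ α + β + 2 * z)]
    simp only [hG]
    linarith
  have hGid : ∀ y : ℝ, G y + G (c - y)
      = (gaussDensity τ (β + y) - gaussDensity τ (α + y))
        + (gaussDensity τ (β + (c - y)) - gaussDensity τ (α + (c - y))) := by
    intro y
    simp only [hG]
    rw [show α - (c - y) = -(β - y) by rw [hc]; ring,
      show β - (c - y) = -(α - y) by rw [hc]; ring, gauss_even, gauss_even]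
    ring
  have hGsum : ∀ y : ℝ, 0 ≤ y → y ≤ c / 2 → 0 ≤ G y + G (c - y) := by
    intro y hy0 hy
    rw [hGid y]
    have h1 : gaussDensity τ (α + y) ≤ gaussDensity τ (β + y) := by
      apply gauss_anti hτ
      nlinarith [mul_nonneg (sub_nonneg.2 hβα) (by linarith : (0:ℝ) ≤ α + β + 2 * y)]
    have h2 : gaussDensity τ (α + (c - y)) ≤ gaussDensity τ (β + (c - y)) := by
      apply gauss_anti hτ
      nlinarith [mul_nonneg (sub_nonneg.2 hβα)
        (by rw [hc] at hy ⊢; linarith : (0:ℝ) ≤ α + β + 2 * (c - y))]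
    linarith
  -- split the integral
  have hsplit1 : (∫ y in (0:ℝ)..(c/2), deriv F y * G y)
      + (∫ y in (c/2)..c, deriv F y * G y) = ∫ y in (0:ℝ)..c, deriv F y * G y :=
    intervalIntegral.integral_add_adjacent_intervals (hGii 0 (c/2)) (hGii (c/2) c)
  have hsplit2 : (∫ y in (0:ℝ)..c, deriv F y * G y)
      + (∫ y in c..a, deriv F y * G y) = ∫ y in (0:ℝ)..a, deriv F y * G y :=
    intervalIntegral.integral_add_adjacent_intervals (hGii 0 c) (hGii c a)
  have hmid : (∫ y in (c/2)..c, deriv F y * G y)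
      = ∫ y in (0:ℝ)..(c/2), deriv F (c - y) * G (c - y) := by
    have h4 := intervalIntegral.integral_comp_sub_left
      (a := (0:ℝ)) (b := c/2) (fun u => deriv F u * G u) c
    rw [show c - c/2 = c/2 by ring, sub_zero] at h4
    exact h4.symm
  have nonpos1 : (∫ y in (0:ℝ)..(c/2), deriv F y * G y)
      + (∫ y in (c/2)..c, deriv F y * G y) ≤ 0 := by
    have hGii2 : IntervalIntegrable (fun y => deriv F (c - y) * G (c - y))
        volume 0 (c/2) := by
      apply Continuous.intervalIntegrable
      have hcs : Continuous fun y : ℝ => c - y := continuous_const.sub continuous_id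
      exact (hF.dcont.comp hcs).mul (hGcont.comp hcs)
    rw [hmid, ← intervalIntegral.integral_add (hGii 0 (c/2)) hGii2]
    have hnp : ∀ y ∈ Set.Icc (0:ℝ) (c/2),
        deriv F y * G y + deriv F (c - y) * G (c - y) ≤ 0 := by
      intro y hy
      obtain ⟨hy0, hyc⟩ := hy
      have hya : y ≤ a := by linarith
      have hA0 : deriv F y ≤ 0 := hF.deriv_nonpos hy0 hya
      have hB0 : deriv F (c - y) ≤ 0 := hF.deriv_nonpos (by linarith) (by linarith)
      have hBA : deriv F (c - y) ≤ deriv F y := by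
        apply hF.spair (c - y) y hy0 (by linarith) (by rw [hc]; ring_nf; linarith)
      have hG2 : 0 ≤ G (c - y) := hGpos (c - y) (by linarith)
      have hGs : 0 ≤ G y + G (c - y) := hGsum y hy0 hyc
      rcases le_or_gt 0 (G y) with hGy | hGy
      · have := mul_nonpos_of_nonpos_of_nonneg hA0 hGy
        have := mul_nonpos_of_nonpos_of_nonneg hB0 hG2
        linarith
      · have h1 : deriv F y * G y ≤ deriv F (c - y) * G y :=
          mul_le_mul_of_nonpos_right hBA hGy.le
        have h3 : deriv F (c - y) * (G y + G (c - y)) ≤ 0 :=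
          mul_nonpos_of_nonpos_of_nonneg hB0 hGs
        have h2 : deriv F (c - y) * G y + deriv F (c - y) * G (c - y)
            = deriv F (c - y) * (G y + G (c - y)) := by ring
        linarith
    have := intervalIntegral.integral_nonneg (μ := volume) (f := fun y =>
        -(deriv F y * G y + deriv F (c - y) * G (c - y)))
      (by linarith : (0:ℝ) ≤ c/2) (fun u hu => neg_nonneg.mpr (hnp u hu))
    rw [intervalIntegral.integral_neg] at this
    linarith
  have nonpos2 : (∫ y in c..a, deriv F y * G y) ≤ 0 := by
    have hnp : ∀ y ∈ Set.Icc c a, deriv F y * G y ≤ 0 := by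
      intro y hy
      exact mul_nonpos_of_nonpos_of_nonneg
        (hF.deriv_nonpos (le_trans hc0 hy.1) hy.2)
        (hGpos y (by linarith [hy.1]))
    have := intervalIntegral.integral_nonneg (μ := volume)
      (f := fun y => -(deriv F y * G y))
      hca (fun u hu => neg_nonneg.mpr (hnp u hu))
    rw [intervalIntegral.integral_neg] at this
    linarith
  linarith [fold, hsplit1, hsplit2, nonpos1, nonpos2]

lemma T_cont (hτ : 0 < τ) {F : ℝ → ℝ} (hFc : Continuous F) (hF0 : ∀ y, 0 ≤ F y)
    (hF1 : ∀ y, F y ≤ 1) : Continuous (T τ a F) := by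
  unfold T
  apply intervalIntegral.continuous_of_dominated_interval
    (bound := fun _ => gaussDensity τ 0)
  · intro x
    exact (((continuous_gauss τ).comp (continuous_const.sub continuous_id)).mul
      hFc).aestronglyMeasurable
  · intro x
    refine Filter.Eventually.of_forall fun y _ => ?_
    have h0 : 0 ≤ gaussDensity τ (x - y) * F y :=
      mul_nonneg (gauss_nonneg _ _) (hF0 y)
    rw [Real.norm_eq_abs, abs_of_nonneg h0]
    calc gaussDensity τ (x - y) * F y ≤ gaussDensity τ (x - y) * 1 :=
          mul_le_mul_of_nonneg_left (hF1 y) (gauss_nonneg _ _)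
      _ ≤ gaussDensity τ 0 := by rw [mul_one]; exact gauss_le_peak hτ _
  · exact intervalIntegrable_const
  · refine Filter.Eventually.of_forall fun y _ => ?_
    exact (((continuous_gauss τ).comp (continuous_id.sub continuous_const)).mul
      continuous_const)

lemma T_deriv_cont (hτ : 0 < τ) (ha : 0 < a) {F : ℝ → ℝ} (hFc : Continuous F)
    (hF0 : ∀ y, 0 ≤ F y) (hF1 : ∀ y, F y ≤ 1) : Continuous (deriv (T τ a F)) := by
  have e : deriv (T τ a F)
      = fun x => ∫ y in (-a)..a, -((x - y) / τ) * gaussDensity τ (x - y) * F y :=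
    funext fun x => deriv_T hτ ha hFc hF0 hF1 x
  rw [e]
  apply intervalIntegral.continuous_of_dominated_interval (bound := fun _ => Cg τ)
  · intro x
    exact ((continuous_Tker hFc).comp
      (continuous_const.prodMk continuous_id)).aestronglyMeasurable
  · intro x
    refine Filter.Eventually.of_forall fun y _ => ?_
    have hFb : |F y| ≤ 1 := abs_le.2 ⟨by linarith [hF0 y], hF1 y⟩
    calc ‖-((x - y) / τ) * gaussDensity τ (x - y) * F y‖
        = ‖-((x - y) / τ) * gaussDensity τ (x - y)‖ * |F y| := by
          rw [norm_mul]; rfl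
      _ ≤ Cg τ * 1 :=
          mul_le_mul (gauss_deriv_norm_bound hτ _) hFb (abs_nonneg _)
            (le_trans (norm_nonneg _) (gauss_deriv_norm_bound hτ 0))
      _ = Cg τ := mul_one _
  · exact intervalIntegrable_const
  · refine Filter.Eventually.of_forall fun y _ => ?_
    exact (continuous_Tker hFc).comp (continuous_id.prodMk continuous_const)

lemma T_even (hF : ∀ y : ℝ, F (-y) = F y) (x : ℝ) : T τ a F (-x) = T τ a F x := by
  unfold T
  have h1 : (∫ y in (-a)..a, gaussDensity τ (-x - y) * F y)
      = ∫ y in (-a)..a, (fun u => gaussDensity τ (x - u) * F u) (-y) := by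
    apply intervalIntegral.integral_congr
    intro y _
    simp only []
    rw [show x - -y = -(-x - y) by ring, gauss_even, hF y]
  rw [h1, intervalIntegral.integral_comp_neg (fun u => gaussDensity τ (x - u) * F u),
    neg_neg]

lemma T_nonneg (ha : 0 < a) {F : ℝ → ℝ} (hF0 : ∀ y, 0 ≤ F y) (x : ℝ) :
    0 ≤ T τ a F x :=
  intervalIntegral.integral_nonneg (by linarith)
    (fun y _ => mul_nonneg (gauss_nonneg _ _) (hF0 y))

lemma T_le_one (hτ : 0 < τ) (ha : 0 < a) {F : ℝ → ℝ} (hFc : Continuous F)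
    (hF0 : ∀ y, 0 ≤ F y) (hF1 : ∀ y, F y ≤ 1) (x : ℝ) : T τ a F x ≤ 1 := by
  have hgc : Continuous fun y => gaussDensity τ (x - y) :=
    (continuous_gauss τ).comp (continuous_const.sub continuous_id)
  have h1 : T τ a F x ≤ ∫ y in (-a)..a, gaussDensity τ (x - y) := by
    unfold T
    apply intervalIntegral.integral_mono_on (by linarith)
      ((hgc.mul hFc).intervalIntegrable _ _) (hgc.intervalIntegrable _ _)
    intro y _
    calc gaussDensity τ (x - y) * F y ≤ gaussDensity τ (x - y) * 1 :=
          mul_le_mul_of_nonneg_left (hF1 y) (gauss_nonneg _ _)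
      _ = gaussDensity τ (x - y) := mul_one _
  have h2 : (∫ y in (-a)..a, gaussDensity τ (x - y))
      = ∫ u in (x - a)..(x + a), gaussDensity τ u := by
    rw [intervalIntegral.integral_comp_sub_left (gaussDensity τ) x]
    rw [show x - -a = x + a by ring]
  have h3 : (∫ u in (x - a)..(x + a), gaussDensity τ u) ≤ ∫ u : ℝ, gaussDensity τ u := by
    rw [intervalIntegral.integral_of_le (by linarith)]
    exact setIntegral_le_integral (integrable_gauss hτ)
      (Filter.Eventually.of_forall fun u => gauss_nonneg τ u)
  rw [integral_gauss hτ] at h3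
  linarith

/-- The main propagation lemma: `T` preserves the invariant. -/
lemma INV_T (hτ : 0 < τ) (ha : 0 < a) {F : ℝ → ℝ} (hF : INV a F) :
    INV a (T τ a F) where
  cont := T_cont hτ hF.cont hF.nonneg hF.le_one
  diff := fun x => (hasDerivAt_T hτ ha hF.cont hF.nonneg hF.le_one x).differentiableAt
  dcont := T_deriv_cont hτ ha hF.cont hF.nonneg hF.le_one
  even := fun x => T_even hF.even x
  nonneg := fun x => T_nonneg ha hF.nonneg x
  le_one := fun x => T_le_one hτ ha hF.cont hF.nonneg hF.le_one x
  spair := T_spair hτ ha hF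

lemma INV_const_one (ha : 0 < a) : INV a (fun _ : ℝ => (1:ℝ)) where
  cont := continuous_const
  diff := fun _ => differentiableAt_const _
  dcont := by simp only [deriv_const']; exact continuous_const
  even := fun _ => rfl
  nonneg := fun _ => zero_le_one
  le_one := fun _ => le_rfl
  spair := by
    intro α β _ _ _
    simp [deriv_const']




lemma const_eq_cons {n : ℕ} (c : ℝ) :
    (fun _ : Fin (n+1) => c) = Fin.cons c (fun _ : Fin n => c) := by
  funext k
  refine Fin.cases ?_ (fun j => ?_) k <;> simp

lemma cons_eval_continuous {n : ℕ} (x : ℝ) (k : Fin (n+1)) :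
    Continuous (fun z : Fin n → ℝ => (Fin.cons x z : Fin (n+1) → ℝ) k) := by
  refine Fin.cases ?_ (fun j => ?_) k
  · simp only [Fin.cons_zero]; exact continuous_const
  · simp only [Fin.cons_succ]; exact continuous_apply j

lemma integrand_continuous (n : ℕ) (t : Fin n → ℝ) (x : ℝ) :
    Continuous (fun y : Fin n → ℝ => ∏ i : Fin n,
      gaussDensity
        ((Fin.cons 0 t : Fin (n + 1) → ℝ) i.succ - (Fin.cons 0 t : Fin (n + 1) → ℝ) i.castSucc)
        ((Fin.cons x y : Fin (n + 1) → ℝ) i.castSucc - (Fin.cons x y : Fin (n + 1) → ℝ) i.succ)) := by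
  apply continuous_finset_prod
  intro i _
  exact (continuous_gauss _).comp
    ((cons_eval_continuous x i.castSucc).sub (cons_eval_continuous x i.succ))

lemma fdd_zero (a : ℝ) (t : Fin 0 → ℝ) (x : ℝ) : brownianFDD1 0 a t x = 1 := by
  unfold brownianFDD1
  have h1 : (Set.Icc (fun _ : Fin 0 => -a) (fun _ : Fin 0 => a)) = Set.univ := by
    ext y
    simp [Set.mem_Icc, Pi.le_def]
  rw [h1, setIntegral_univ]
  have h2 : (volume : Measure (Fin 0 → ℝ)) Set.univ = 1 := by
    rw [show (volume : Measure (Fin 0 → ℝ)) = Measure.pi (fun _ => volume) from rfl,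
      Measure.pi_univ]
    simp
  simp only [Finset.univ_eq_empty, Finset.prod_empty]
  rw [integral_const, measureReal_def, h2]
  simp

lemma fdd_succ (n : ℕ) (a : ℝ) (t : Fin (n+1) → ℝ) (x : ℝ) :
    brownianFDD1 (n+1) a t x
      = ∫ w in Set.Icc (-a) a, gaussDensity (t 0) (x - w)
          * brownianFDD1 n a (fun j => t j.succ - t 0) w := by
  classical
  set t' : Fin n → ℝ := fun j => t j.succ - t 0 with ht'
  set B : Set (Fin (n+1) → ℝ) := Set.Icc (fun _ => -a) (fun _ => a) with hB
  set Bn : Set (Fin n → ℝ) := Set.Icc (fun _ => -a) (fun _ => a) with hBn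
  set f : (Fin (n+1) → ℝ) → ℝ := fun y => ∏ i : Fin (n+1),
      gaussDensity
        ((Fin.cons 0 t : Fin (n+2) → ℝ) i.succ - (Fin.cons 0 t : Fin (n+2) → ℝ) i.castSucc)
        ((Fin.cons x y : Fin (n+2) → ℝ) i.castSucc - (Fin.cons x y : Fin (n+2) → ℝ) i.succ)
    with hf
  have hfc : Continuous f := integrand_continuous (n+1) t x
  -- membership splitting
  have hmem : ∀ (w : ℝ) (v : Fin n → ℝ),
      ((Fin.cons w v : Fin (n+1) → ℝ) ∈ B) ↔ (w ∈ Set.Icc (-a) a ∧ v ∈ Bn) := by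
    intro w v
    rw [hB, hBn]
    rw [Set.mem_Icc, Set.mem_Icc, Set.mem_Icc]
    rw [const_eq_cons (-a), const_eq_cons a, Fin.cons_le_cons, Fin.cons_le_cons]
    tauto
  -- the key pointwise factorization
  have hsplit : ∀ (w : ℝ) (v : Fin n → ℝ),
      f (Fin.cons w v) = gaussDensity (t 0) (x - w) * ∏ i : Fin n,
        gaussDensity
          ((Fin.cons 0 t' : Fin (n+1) → ℝ) i.succ - (Fin.cons 0 t' : Fin (n+1) → ℝ) i.castSucc)
          ((Fin.cons w v : Fin (n+1) → ℝ) i.castSucc - (Fin.cons w v : Fin (n+1) → ℝ) i.succ) := by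
    intro w v
    have hconsT : (Fin.cons 0 t' : Fin (n+1) → ℝ) = fun k => t k - t 0 := by
      funext k
      refine Fin.cases ?_ (fun j => ?_) k
      · simp
      · simp [ht']
    rw [hf]
    simp only []
    rw [Fin.prod_univ_succ]
    have h0 : gaussDensity
        ((Fin.cons 0 t : Fin (n+2) → ℝ) (0 : Fin (n+1)).succ
          - (Fin.cons 0 t : Fin (n+2) → ℝ) (0 : Fin (n+1)).castSucc)
        ((Fin.cons x (Fin.cons w v) : Fin (n+2) → ℝ) (0 : Fin (n+1)).castSucc
          - (Fin.cons x (Fin.cons w v) : Fin (n+2) → ℝ) (0 : Fin (n+1)).succ)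
        = gaussDensity (t 0) (x - w) := by
      norm_num
    rw [h0]
    congr 1
    apply Finset.prod_congr rfl
    intro i _
    have e1 : (Fin.cons 0 t : Fin (n+2) → ℝ) (i.succ).succ = t i.succ := by simp
    have e2 : (Fin.cons 0 t : Fin (n+2) → ℝ) (i.succ).castSucc = t i.castSucc := by
      rw [← Fin.succ_castSucc]
      simp
    have e3 : (Fin.cons x (Fin.cons w v) : Fin (n+2) → ℝ) (i.succ).castSucc
        = (Fin.cons w v : Fin (n+1) → ℝ) i.castSucc := by
      rw [← Fin.succ_castSucc]
      simp
    have e4 : (Fin.cons x (Fin.cons w v) : Fin (n+2) → ℝ) (i.succ).succ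
        = (Fin.cons w v : Fin (n+1) → ℝ) i.succ := by simp
    have e5 : (Fin.cons 0 t' : Fin (n+1) → ℝ) i.succ
        - (Fin.cons 0 t' : Fin (n+1) → ℝ) i.castSucc = t i.succ - t i.castSucc := by
      rw [hconsT]
      ring
    rw [e1, e2, e3, e4, e5]
  -- measure-theoretic part
  have hmp := (MeasureTheory.volume_preserving_piFinSuccAbove
    (fun _ : Fin (n+1) => ℝ) 0).symm
  have hsymm : ∀ p : ℝ × (Fin n → ℝ),
      (MeasurableEquiv.piFinSuccAbove (fun _ : Fin (n+1) => ℝ) 0).symm p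
        = Fin.cons p.1 p.2 := by
    intro p
    exact Fin.insertNth_zero' p.1 p.2
  have step1 : brownianFDD1 (n+1) a t x = ∫ y, B.indicator f y := by
    rw [brownianFDD1]
    exact (integral_indicator measurableSet_Icc).symm
  have step2 : (∫ y, B.indicator f y)
      = ∫ p : ℝ × (Fin n → ℝ), B.indicator f (Fin.cons p.1 p.2) := by
    rw [← hmp.integral_comp' (B.indicator f)]
    apply integral_congr_ae
    apply Filter.Eventually.of_forall
    intro p
    simp only [hsymm]
  have hprodset : (fun p : ℝ × (Fin n → ℝ) => B.indicator f (Fin.cons p.1 p.2))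
      = (Set.Icc (-a) a ×ˢ Bn).indicator (fun p => f (Fin.cons p.1 p.2)) := by
    funext p
    by_cases hp : (Fin.cons p.1 p.2 : Fin (n+1) → ℝ) ∈ B
    · rw [Set.indicator_of_mem hp,
        Set.indicator_of_mem (Set.mem_prod.2 ((hmem _ _).1 hp))]
    · rw [Set.indicator_of_notMem hp,
        Set.indicator_of_notMem (fun hc => hp ((hmem _ _).2 (Set.mem_prod.1 hc)))]
  have hBnm : MeasurableSet Bn := measurableSet_Icc
  have hcontcons : Continuous (fun p : ℝ × (Fin n → ℝ) => f (Fin.cons p.1 p.2)) := by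
    apply hfc.comp
    apply continuous_pi
    intro k
    refine Fin.cases ?_ (fun j => ?_) k
    · simpa using (continuous_fst : Continuous (fun p : ℝ × (Fin n → ℝ) => p.1))
    · simpa [Function.comp_def] using (continuous_apply j).comp
        (continuous_snd : Continuous (fun p : ℝ × (Fin n → ℝ) => p.2))
  have hint : Integrable
      ((Set.Icc (-a) a ×ˢ Bn).indicator (fun p => f (Fin.cons p.1 p.2)))
      ((volume : Measure ℝ).prod (volume : Measure (Fin n → ℝ))) := by
    rw [← MeasureTheory.Measure.volume_eq_prod]
    rw [integrable_indicator_iff (measurableSet_Icc.prod hBnm)]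
    exact hcontcons.continuousOn.integrableOn_compact (isCompact_Icc.prod isCompact_Icc)
  have step3 : (∫ p : ℝ × (Fin n → ℝ),
        (Set.Icc (-a) a ×ˢ Bn).indicator (fun q => f (Fin.cons q.1 q.2)) p)
      = ∫ w : ℝ, ∫ v : Fin n → ℝ,
          (Set.Icc (-a) a ×ˢ Bn).indicator (fun q => f (Fin.cons q.1 q.2)) (w, v) := by
    rw [MeasureTheory.Measure.volume_eq_prod]
    exact MeasureTheory.integral_prod _ hint
  have step4 : ∀ w : ℝ,
      (∫ v : Fin n → ℝ,
        (Set.Icc (-a) a ×ˢ Bn).indicator (fun q => f (Fin.cons q.1 q.2)) (w, v))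
      = (Set.Icc (-a) a).indicator
          (fun w => gaussDensity (t 0) (x - w) * brownianFDD1 n a t' w) w := by
    intro w
    by_cases hw : w ∈ Set.Icc (-a) a
    · rw [Set.indicator_of_mem hw]
      have hptw : ∀ v : Fin n → ℝ,
          (Set.Icc (-a) a ×ˢ Bn).indicator (fun q => f (Fin.cons q.1 q.2)) (w, v)
            = Bn.indicator (fun v => f (Fin.cons w v)) v := by
        intro v
        by_cases hv : v ∈ Bn
        · rw [Set.indicator_of_mem (Set.mem_prod.2 ⟨hw, hv⟩), Set.indicator_of_mem hv]
        · rw [Set.indicator_of_notMem (fun hc => hv (Set.mem_prod.1 hc).2),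
            Set.indicator_of_notMem hv]
      rw [integral_congr_ae (Filter.Eventually.of_forall hptw),
        integral_indicator hBnm,
        setIntegral_congr_fun hBnm (fun v _ => hsplit w v),
        integral_const_mul]
      rw [brownianFDD1, hBn]
    · rw [Set.indicator_of_notMem hw]
      have hptw : ∀ v : Fin n → ℝ,
          (Set.Icc (-a) a ×ˢ Bn).indicator (fun q => f (Fin.cons q.1 q.2)) (w, v) = 0 :=
        fun v => Set.indicator_of_notMem (fun hc => hw (Set.mem_prod.1 hc).1) _
      rw [integral_congr_ae (Filter.Eventually.of_forall hptw), integral_zero]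
  calc brownianFDD1 (n+1) a t x
      = ∫ p : ℝ × (Fin n → ℝ), B.indicator f (Fin.cons p.1 p.2) := by
        rw [step1, step2]
    _ = ∫ w : ℝ, ∫ v : Fin n → ℝ,
          (Set.Icc (-a) a ×ˢ Bn).indicator (fun q => f (Fin.cons q.1 q.2)) (w, v) := by
        rw [hprodset] at *
        exact step3
    _ = ∫ w : ℝ, (Set.Icc (-a) a).indicator
          (fun w => gaussDensity (t 0) (x - w) * brownianFDD1 n a t' w) w :=
        integral_congr_ae (Filter.Eventually.of_forall step4)
    _ = ∫ w in Set.Icc (-a) a, gaussDensity (t 0) (x - w) * brownianFDD1 n a t' w :=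
        integral_indicator measurableSet_Icc


lemma fdd_eq_T (ha : 0 < a) (n : ℕ) (t : Fin (n+1) → ℝ) (x : ℝ) :
    brownianFDD1 (n+1) a t x
      = T (t 0) a (brownianFDD1 n a (fun j => t j.succ - t 0)) x := by
  rw [fdd_succ n a t x, T, intervalIntegral.integral_of_le (by linarith : -a ≤ a),
    ← MeasureTheory.integral_Icc_eq_integral_Ioc]

lemma INV_fdd (ha : 0 < a) : ∀ (n : ℕ) (t : Fin n → ℝ),
    (∀ i, 0 < t i) → StrictMono t → INV a (brownianFDD1 n a t) := by
  intro n
  induction n with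
  | zero =>
      intro t _ _
      have : brownianFDD1 0 a t = fun _ => (1:ℝ) := funext fun x => fdd_zero a t x
      rw [this]
      exact INV_const_one ha
  | succ m ih =>
      intro t ht htm
      have h1 : brownianFDD1 (m+1) a t
          = T (t 0) a (brownianFDD1 m a (fun j => t j.succ - t 0)) :=
        funext fun x => fdd_eq_T ha m t x
      rw [h1]
      apply INV_T (ht 0) ha
      apply ih
      · intro i
        have := htm (Fin.succ_pos i)
        simpa using sub_pos.2 this
      · intro i j hij
        have : (i.succ : Fin (m+1)) < j.succ := Fin.succ_lt_succ_iff.2 hij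
        simpa using sub_lt_sub_right (htm this) (t 0)

lemma INV.deriv_anti (h : INV a F) (ha : 0 < a) :
    AntitoneOn (deriv F) (Set.Ioo (-(a/2)) (a/2)) := by
  intro x hx y hy hxy
  obtain ⟨hx1, hx2⟩ := hx
  obtain ⟨hy1, hy2⟩ := hy
  rcases le_or_gt 0 x with h0x | h0x
  · exact h.spair y x h0x hxy (by linarith)
  · rcases le_or_gt y 0 with hy0 | hy0
    · have h2 : deriv F (-x) ≤ deriv F (-y) :=
        h.spair (-x) (-y) (by linarith) (by linarith) (by linarith)
      rw [h.deriv_odd x, h.deriv_odd y] at h2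
      linarith
    · have h3 : deriv F y ≤ 0 := h.deriv_nonpos hy0.le (by linarith)
      have h4 : deriv F (-x) ≤ 0 := h.deriv_nonpos (by linarith) (by linarith)
      rw [h.deriv_odd x] at h4
      linarith

lemma INV.concave (h : INV a F) (ha : 0 < a) :
    ConcaveOn ℝ (Set.Ioo (-(a/2)) (a/2)) F := by
  apply AntitoneOn.concaveOn_of_deriv (convex_Ioo _ _) h.cont.continuousOn
  · exact fun x _ => (h.diff x).differentiableWithinAt
  · rw [interior_Ioo]
    exact h.deriv_anti ha

lemma INV.monotone (h : INV a F) (ha : 0 < a) :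
    MonotoneOn F (Set.Ioo (-a) (0:ℝ)) := by
  apply monotoneOn_of_deriv_nonneg (convex_Ioo _ _) h.cont.continuousOn
  · exact fun x _ => (h.diff x).differentiableWithinAt
  · intro x hx
    rw [interior_Ioo] at hx
    obtain ⟨hx1, hx2⟩ := hx
    have h4 : deriv F (-x) ≤ 0 := h.deriv_nonpos (by linarith) (by linarith)
    rw [h.deriv_odd x] at h4
    linarith

lemma INV.antitone (h : INV a F) (ha : 0 < a) :
    AntitoneOn F (Set.Ioo (0:ℝ) a) := by
  apply antitoneOn_of_deriv_nonpos (convex_Ioo _ _) h.cont.continuousOn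
  · exact fun x _ => (h.diff x).differentiableWithinAt
  · intro x hx
    rw [interior_Ioo] at hx
    exact h.deriv_nonpos hx.1.le hx.2.le


end BddBox

open BddBox


open BddBox in
/-- In each coordinate direction, with the other coordinates fixed inside the rectangle,
`F` is concave on the middle half, nondecreasing on `(-a_j, 0)` and nonincreasing
on `(0, a_j)`. -/
theorem brownian_fdd_d_mid_concave (d : ℕ) (hd : 0 < d) (n : ℕ) (hn : 0 < n)
    (a : Fin d → ℝ) (ha : ∀ j, 0 < a j)
    (t : Fin n → ℝ) (ht : ∀ i, 0 < t i) (htm : StrictMono t)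
    (j : Fin d) (x : Fin d → ℝ)
    (hx : ∀ k, k ≠ j → x k ∈ Set.Ioo (-(a k)) (a k)) :
    ConcaveOn ℝ (Set.Ioo (-(a j / 2)) (a j / 2))
      (fun s => brownianFDDd d n a t (Function.update x j s)) ∧
    MonotoneOn (fun s => brownianFDDd d n a t (Function.update x j s))
      (Set.Ioo (-(a j)) (0 : ℝ)) ∧
    AntitoneOn (fun s => brownianFDDd d n a t (Function.update x j s))
      (Set.Ioo (0 : ℝ) (a j)) := by
  classical
  have hINV : ∀ k : Fin d, INV (a k) (brownianFDD1 n (a k) t) :=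
    fun k => INV_fdd (ha k) n t ht htm
  set C : ℝ := ∏ k ∈ Finset.univ \ {j}, brownianFDD1 n (a k) t (x k) with hC
  have hC0 : 0 ≤ C :=
    Finset.prod_nonneg fun k _ => (hINV k).nonneg (x k)
  have hrep : (fun s => brownianFDDd d n a t (Function.update x j s))
      = fun s => brownianFDD1 n (a j) t s * C := by
    funext s
    rw [brownianFDDd]
    have e1 : (fun k => brownianFDD1 n (a k) t (Function.update x j s k))
        = Function.update (fun k => brownianFDD1 n (a k) t (x k)) j
            (brownianFDD1 n (a j) t s) := by
      funext k
      by_cases hk : k = j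
      · subst hk
        rw [Function.update_self, Function.update_self]
      · rw [Function.update_of_ne hk, Function.update_of_ne hk]
    calc (∏ k, brownianFDD1 n (a k) t (Function.update x j s k))
        = ∏ k, Function.update (fun k => brownianFDD1 n (a k) t (x k)) j
            (brownianFDD1 n (a j) t s) k := by rw [e1]
      _ = brownianFDD1 n (a j) t s * C :=
          Finset.prod_update_of_mem (Finset.mem_univ j) _ _
  rw [hrep]
  have hj := hINV j
  have haj := ha j
  refine ⟨?_, ?_, ?_⟩
  · have h1 := (hj.concave haj).smul hC0
    have e : (fun s => brownianFDD1 n (a j) t s * C) = fun s => C • brownianFDD1 n (a j) t s := by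
      funext s; rw [smul_eq_mul, mul_comm]
    rw [e]; exact h1
  · intro u hu v hv huv
    exact mul_le_mul_of_nonneg_right ((hj.monotone haj) hu hv huv) hC0
  · intro u hu v hv huv
    exact mul_le_mul_of_nonneg_right ((hj.antitone haj) hu hv huv) hC0
end

section
/- Let t > 0 and let ψ : ℝ → ℝ be continuously differentiable on a neighborhood of [-1, 1] and even (ψ(-y) = ψ(y) for all y), with ψ'(y) ≤ 0 for all y ∈ (0, 1). Then for every x ∈ (0, 1), ∫_{-1}^{1} e^{-(y-x)²/(2t)} ψ'(y) dy ≤ 0. -/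
open MeasureTheory Real Set

/-!
Since `ψ` is even, `ψ'` is odd, so folding `[-1, 0]` onto `[0, 1]` turns the integral into
`∫₀¹ (w(y) - w(-y)) ψ'(y) dy` with the Gaussian weight `w(y) = e^{-(y-x)²/(2t)}`. For `x, y ≥ 0`
the point `y` is closer to `x` than `-y` is, so `w(y) ≥ w(-y)`, while `ψ'(y) ≤ 0`.
-/

theorem Function.Even.deriv {𝕜 F : Type*} [NontriviallyNormedField 𝕜] [NormedAddCommGroup F]
    [NormedSpace 𝕜 F] {f : 𝕜 → F} (hf : f.Even) : (deriv f).Odd := fun y => by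
  have := deriv_comp_neg f (-y)
  rwa [show (fun x => f (-x)) = f from funext hf, neg_neg] at this

theorem setIntegral_Ioo_neg_comp_neg (h : ℝ → ℝ) (a : ℝ) :
    ∫ y in Ioo (-a) a, h (-y) = ∫ y in Ioo (-a) a, h y := by
  simpa [and_comm] using (Measure.measurePreserving_neg volume).setIntegral_preimage_emb
    (Homeomorph.neg ℝ).measurableEmbedding h (Ioo (-a) a)

theorem MeasureTheory.IntegrableOn.comp_neg_Ioo {h : ℝ → ℝ} {a : ℝ}
    (hh : IntegrableOn h (Ioo (-a) a)) :
    IntegrableOn (fun y => h (-y)) (Ioo (-a) a) := by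
  have := (Measure.measurePreserving_neg (volume : Measure ℝ)).integrableOn_comp_preimage
    (Homeomorph.neg ℝ).measurableEmbedding (s := Ioo (-a) a) (f := h)
  simp only [neg_preimage, neg_Ioo, neg_neg] at this
  exact this.2 hh

theorem setIntegral_Icc_neg_nonpos_of_add_comp_neg_nonpos {h : ℝ → ℝ} {a : ℝ}
    (hh : ∀ y ∈ Ioo (-a) a, h y + h (-y) ≤ 0) : ∫ y in Icc (-a) a, h y ≤ 0 := by
  rw [integral_Icc_eq_integral_Ioo]
  by_cases hint : IntegrableOn h (Ioo (-a) a)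
  · have hsum : 2 * ∫ y in Ioo (-a) a, h y = ∫ y in Ioo (-a) a, (h y + h (-y)) := by
      rw [integral_add hint hint.comp_neg_Ioo, setIntegral_Ioo_neg_comp_neg]
      ring
    linarith [setIntegral_nonpos (μ := volume) measurableSet_Ioo hh]
  · rw [integral_undef hint]

theorem setIntegral_Icc_neg_mul_nonpos_of_odd {w f : ℝ → ℝ} {a : ℝ} (hf : f.Odd)
    (hf_nonpos : ∀ y ∈ Ioo 0 a, f y ≤ 0) (hw : ∀ y ∈ Ioo 0 a, w (-y) ≤ w y) :
    ∫ y in Icc (-a) a, w y * f y ≤ 0 := by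
  have hsym (y : ℝ) : w y * f y + w (-y) * f (-y) = (w y - w (-y)) * f y := by
    rw [hf.eq]; ring
  have hpos (y : ℝ) (hy : y ∈ Ioo 0 a) : (w y - w (-y)) * f y ≤ 0 :=
    mul_nonpos_of_nonneg_of_nonpos (sub_nonneg.2 (hw y hy)) (hf_nonpos y hy)
  refine setIntegral_Icc_neg_nonpos_of_add_comp_neg_nonpos fun y ⟨hay, hya⟩ => ?_
  rcases lt_trichotomy y 0 with hy | rfl | hy
  · have := hpos (-y) ⟨neg_pos.2 hy, by linarith⟩
    rwa [← hsym, neg_neg, add_comm] at this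
  · rw [hsym, neg_zero, sub_self, zero_mul]
  · rw [hsym]
    exact hpos y ⟨hy, hya⟩

theorem exp_neg_sq_neg_sub_div_le {x y t : ℝ} (hx : 0 ≤ x) (hy : 0 ≤ y) (ht : 0 ≤ t) :
    exp (-(-y - x) ^ 2 / (2 * t)) ≤ exp (-(y - x) ^ 2 / (2 * t)) :=
  exp_le_exp.2 (div_le_div_of_nonneg_right (by nlinarith) (by positivity))

theorem gauss_weighted_deriv_integral_nonpos_general (t : ℝ) (ht : 0 < t) (ψ : ℝ → ℝ)
    (heven : ∀ y, ψ (-y) = ψ y)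
    (hd : ∀ y ∈ Set.Ioo (0 : ℝ) 1, deriv ψ y ≤ 0)
    (x : ℝ) (hx : x ∈ Set.Ioo (0 : ℝ) 1) :
    ∫ y in Set.Icc (-1 : ℝ) 1, Real.exp (-(y - x) ^ 2 / (2 * t)) * deriv ψ y ≤ 0 :=
  setIntegral_Icc_neg_mul_nonpos_of_odd (w := fun y => exp (-(y - x) ^ 2 / (2 * t)))
    (Function.Even.deriv heven) hd fun _ hy => exp_neg_sq_neg_sub_div_le hx.1.le hy.1.le ht.le

/-- If `ψ` is `C¹` on a neighborhood of `[-1, 1]`, even, with `ψ' ≤ 0` on `(0, 1)`, then for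
every `x ∈ (0, 1)`, `∫_{-1}^{1} e^{-(y-x)²/(2t)} ψ'(y) dy ≤ 0`. -/
theorem gauss_weighted_deriv_integral_nonpos (t : ℝ) (ht : 0 < t) (ψ : ℝ → ℝ)
    (U : Set ℝ) (hU : IsOpen U) (hIccU : Set.Icc (-1 : ℝ) 1 ⊆ U)
    (hψ : ContDiffOn ℝ 1 ψ U) (heven : ∀ y, ψ (-y) = ψ y)
    (hd : ∀ y ∈ Set.Ioo (0 : ℝ) 1, deriv ψ y ≤ 0)
    (x : ℝ) (hx : x ∈ Set.Ioo (0 : ℝ) 1) :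
    ∫ y in Set.Icc (-1 : ℝ) 1, Real.exp (-(y - x) ^ 2 / (2 * t)) * deriv ψ y ≤ 0 :=
  gauss_weighted_deriv_integral_nonpos_general t ht ψ heven hd x hx
end
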